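/- arXiv:2201.09340 — 9 statements merged into one kernel-verified Lean document; each statement's English description precedes it below -/
import Mathlib

section
/- There is an absolute constant C > 0 such that the following holds. Let d ≥ 2 be an integer, let G be a finite simple graph admitting a coin model (c, r), and let ⪯ be a Koebe ordering of G with respect to (c, r). Then for every vertex u of G, adm_d(u) ≤ C·d/ln(d). -/
open Metric

/-- A coin model of a simple graph `G`: centers `c` and positive radii `r` such that the
open disks are pairwise disjoint and closed disks of adjacent vertices intersect. -/
structure IsCoinModel {V : Type*} (G : SimpleGraph V)
    (c : V → EuclideanSpace ℝ (Fin 2)) (r : V → ℝ) : Prop where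
  r_pos : ∀ v, 0 < r v
  disj : ∀ u v, u ≠ v → Disjoint (ball (c u) (r u)) (ball (c v) (r v))
  touch : ∀ u v, G.Adj u v →
    (closedBall (c u) (r u) ∩ closedBall (c v) (r v)).Nonempty

/-!
Scale so that `r u = 1`; by the Koebe ordering every vertex of a path except the last has radius
`≤ 1`, and the last one has radius `≥ 1`. Put `D = 4 · 2 ^ J` with `J ≈ (log₂ d) / 4`.

If a path stays within distance `D` of `c u` before its last vertex, the coin of that vertex
contains a unit disk inside `ball (c u) (D + 3)`; these disks are disjoint, so there are
`O(D ^ 2) = O(√d)` such paths.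

Any other path crosses each annulus `4 · 2 ^ j ≤ |x - c u| < 4 · 2 ^ (j + 1)`, `j < J`, by touching
coins of radius `≤ 1`, whose radii therefore add up to at least `2 ^ j`. If `m i j` vertices of
path `i` lie in annulus `j`, Cauchy–Schwarz and comparing areas give `∑ i, 1 / m i j ≤ 81`;
together with `∑ j, m i j ≤ d`, Cauchy–Schwarz again bounds the number of such paths by
`81 d / J = O(d / log d)`.
-/

open Finset Real MeasureTheory
open scoped Pointwise

theorem sum_pow_finrank_le_of_pairwiseDisjoint_ball {ι E : Type*} [NormedAddCommGroup E]
    [NormedSpace ℝ E] [FiniteDimensional ℝ E] [Nontrivial E] {s : Finset ι} {x : ι → E}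
    {ρ : ι → ℝ} {o : E} {R : ℝ} (hρ : ∀ i ∈ s, 0 ≤ ρ i) (hR : 0 ≤ R)
    (hdisj : (s : Set ι).PairwiseDisjoint fun i => ball (x i) (ρ i))
    (hsub : ∀ i ∈ s, ball (x i) (ρ i) ⊆ ball o R) :
    ∑ i ∈ s, ρ i ^ Module.finrank ℝ E ≤ R ^ Module.finrank ℝ E := by
  borelize E
  set μ := Measure.addHaar (G := E)
  have hvol : ∀ y (t : ℝ), 0 ≤ t →
      μ (ball y t) = ENNReal.ofReal (t ^ Module.finrank ℝ E) * μ (ball 0 1) :=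
    fun y t ht => μ.addHaar_ball y ht
  have key : ENNReal.ofReal (∑ i ∈ s, ρ i ^ Module.finrank ℝ E) * μ (ball 0 1) ≤
      ENNReal.ofReal (R ^ Module.finrank ℝ E) * μ (ball 0 1) :=
    calc _ = ∑ i ∈ s, μ (ball (x i) (ρ i)) := by
          rw [ENNReal.ofReal_sum_of_nonneg fun i hi => pow_nonneg (hρ i hi) _, sum_mul]
          exact sum_congr rfl fun i hi => (hvol _ _ (hρ i hi)).symm
      _ = μ (⋃ i ∈ s, ball (x i) (ρ i)) :=
          (measure_biUnion_finset hdisj fun _ _ => measurableSet_ball).symm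
      _ ≤ μ (ball o R) := measure_mono (Set.iUnion₂_subset hsub)
      _ = _ := hvol _ _ hR
  rwa [ENNReal.mul_le_mul_iff_left (measure_ball_pos μ 0 one_pos).ne'
    (measure_ball_lt_top (μ := μ)).ne,
    ENNReal.ofReal_le_ofReal_iff (by positivity)] at key

theorem exists_ball_subset_ball_dist_le {E : Type*} [NormedAddCommGroup E] [NormedSpace ℝ E]
    {x y : E} {s ρ : ℝ} (hs : 0 < s) (hsρ : s ≤ ρ) (hx : x ∈ closedBall y ρ) :
    ∃ z, ball z s ⊆ ball y ρ ∧ dist z x ≤ s := by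
  have hρ : 0 < ρ := hs.trans_le hsρ
  have hxy : dist x y ≤ ρ := mem_closedBall.1 hx
  have ht : s / ρ ≤ 1 := (div_le_one hρ).2 hsρ
  refine ⟨AffineMap.lineMap x y (s / ρ), ball_subset_ball' ?_, ?_⟩
  · rw [dist_lineMap_right, Real.norm_of_nonneg (by linarith)]
    calc s + (1 - s / ρ) * dist x y ≤ s + (1 - s / ρ) * ρ := by gcongr
      _ = ρ := by field_simp; ring
  · rw [dist_lineMap_left, Real.norm_of_nonneg (by positivity)]
    calc s / ρ * dist x y ≤ s / ρ * ρ := by gcongr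
      _ = s := by field_simp

theorem le_sum_filter_of_crossing {f g : ℕ → ℝ} {n : ℕ} {a b : ℝ}
    (hg : ∀ t, 0 ≤ g t) (hg₁ : ∀ t ≤ n, g t ≤ 1)
    (hstep : ∀ t < n, |f (t + 1) - f t| ≤ g t + g (t + 1)) (h₀ : f 0 ≤ a) (hn : b ≤ f n) :
    (b - a) / 2 - 1 ≤ ∑ t ∈ range n with a ≤ f t ∧ f t < b, g t := by
  obtain ⟨t₁, ht₁, ht₁n, hbelow⟩ : ∃ t₁, b ≤ f t₁ ∧ t₁ ≤ n ∧ ∀ t < t₁, f t < b :=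
    have hex : ∃ t, b ≤ f t := ⟨n, hn⟩
    ⟨Nat.find hex, Nat.find_spec hex, Nat.find_min' hex hn,
      fun t ht => lt_of_not_ge (Nat.find_min hex ht)⟩
  obtain ⟨t₀, ht₀, ht₀₁, habove⟩ :
      ∃ t₀, f t₀ ≤ a ∧ t₀ ≤ t₁ ∧ ∀ t, t₀ < t → t ≤ t₁ → a < f t :=
    ⟨Nat.findGreatest (fun t => f t ≤ a) t₁,
      Nat.findGreatest_spec (P := fun t => f t ≤ a) (Nat.zero_le _) h₀,
      Nat.findGreatest_le t₁, fun t h₁ h₂ => lt_of_not_ge (Nat.findGreatest_is_greatest h₁ h₂)⟩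
  have hsum : 0 ≤ ∑ t ∈ range n with a ≤ f t ∧ f t < b, g t := sum_nonneg fun t _ => hg t
  rcases ht₀₁.eq_or_lt with rfl | hlt
  · linarith
  have hmid : ∑ t ∈ Ioo t₀ t₁, g t ≤ ∑ t ∈ range n with a ≤ f t ∧ f t < b, g t := by
    refine sum_le_sum_of_subset_of_nonneg (fun t ht => ?_) fun t _ _ => hg t
    rw [mem_Ioo] at ht
    rw [mem_filter, mem_range]
    exact ⟨by omega, (habove t ht.1 ht.2.le).le, hbelow t ht.2⟩
  -- each `g t` with `t₀ < t < t₁` bounds two consecutive steps, `g t₀` and `g t₁` only one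
  have htel : b - a ≤ g t₀ + g t₁ + 2 * ∑ t ∈ Ioo t₀ t₁, g t :=
    calc b - a ≤ f t₁ - f t₀ := by linarith
      _ = ∑ t ∈ Ico t₀ t₁, (f (t + 1) - f t) := (sum_Ico_sub f hlt.le).symm
      _ ≤ ∑ t ∈ Ico t₀ t₁, (g t + g (t + 1)) :=
          sum_le_sum fun t ht => (le_abs_self _).trans (hstep t (by rw [mem_Ico] at ht; omega))
      _ = _ := by
          rw [sum_add_distrib, sum_Ico_add' g, Ico_add_one_add_one_eq_Ioc, ← Ioo_insert_left hlt,
            ← Ioo_insert_right hlt, sum_insert left_notMem_Ioo, sum_insert right_notMem_Ioo]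
          ring
  linarith [hg₁ t₀ (by omega), hg₁ t₁ ht₁n]

theorem sq_mul_sum_inv_card_le {ι α : Type*} {s : Finset ι} {T : ι → Finset α} {f : α → ℝ}
    {L : ℝ} (hL : 0 ≤ L) (hT : ∀ i ∈ s, L ≤ ∑ x ∈ T i, f x) :
    L ^ 2 * ∑ i ∈ s, (#(T i) : ℝ)⁻¹ ≤ ∑ i ∈ s, ∑ x ∈ T i, f x ^ 2 := by
  rw [mul_sum]
  refine sum_le_sum fun i hi => ?_
  rcases (T i).eq_empty_or_nonempty with h | h
  · simp [h]
  have hcard : (0 : ℝ) < #(T i) := by exact_mod_cast h.card_pos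
  rw [← div_eq_mul_inv, div_le_iff₀ hcard]
  calc L ^ 2 ≤ (∑ x ∈ T i, f x) ^ 2 := pow_le_pow_left₀ hL (hT i hi) 2
    _ ≤ #(T i) * ∑ x ∈ T i, f x ^ 2 := sq_sum_le_card_mul_sum_sq
    _ = _ := mul_comm _ _

theorem card_mul_card_sq_le {ι κ : Type*} {s : Finset ι} {t : Finset κ} {m : ι → κ → ℝ}
    {A D : ℝ} (hm : ∀ i ∈ s, ∀ j ∈ t, 0 < m i j) (hD : 0 ≤ D)
    (hrow : ∀ i ∈ s, ∑ j ∈ t, m i j ≤ D) (hcol : ∀ j ∈ t, ∑ i ∈ s, (m i j)⁻¹ ≤ A) :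
    (#s : ℝ) * #t ^ 2 ≤ A * #t * D := by
  have hrow' : ∀ i ∈ s, (#t : ℝ) ^ 2 ≤ D * ∑ j ∈ t, (m i j)⁻¹ := fun i hi =>
    calc (#t : ℝ) ^ 2 = (∑ j ∈ t, 1) ^ 2 := by simp
      _ ≤ (∑ j ∈ t, m i j) * ∑ j ∈ t, (m i j)⁻¹ :=
          sum_sq_le_sum_mul_sum_of_sq_le_mul t (fun j hj => (hm i hi j hj).le)
            (fun j hj => inv_nonneg.2 (hm i hi j hj).le)
            fun j hj => by rw [mul_inv_cancel₀ (hm i hi j hj).ne', one_pow]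
      _ ≤ D * ∑ j ∈ t, (m i j)⁻¹ := mul_le_mul_of_nonneg_right (hrow i hi)
          (sum_nonneg fun j hj => inv_nonneg.2 (hm i hi j hj).le)
  calc (#s : ℝ) * #t ^ 2 = ∑ i ∈ s, (#t : ℝ) ^ 2 := by simp
    _ ≤ ∑ i ∈ s, D * ∑ j ∈ t, (m i j)⁻¹ := sum_le_sum hrow'
    _ = D * ∑ j ∈ t, ∑ i ∈ s, (m i j)⁻¹ := by rw [← mul_sum, sum_comm]
    _ ≤ D * ∑ j ∈ t, A := mul_le_mul_of_nonneg_left (sum_le_sum hcol) hD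
    _ = A * #t * D := by simp; ring

/-- `J = ⌊log₁₆ d⌋ + 1` is at least `log d / 3`, while `4 ^ J` is at most `4 √d`. -/
theorem exists_dyadic_scale {d : ℕ} (hd : 2 ≤ d) :
    ∃ J : ℕ, log d ≤ 3 * J ∧ (4 * 2 ^ J + 3 : ℝ) ^ 2 * log d ≤ 242 * d := by
  set m := Nat.log 16 d
  have hlow : (2 : ℝ) ^ (4 * m) ≤ d := by
    rw [pow_mul]
    exact_mod_cast Nat.pow_log_le_self 16 (by omega)
  have hhigh : (d : ℝ) < 2 ^ (4 * (m + 1)) := by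
    rw [pow_mul]
    exact_mod_cast Nat.lt_pow_succ_log_self (by norm_num) d
  have hd₀ : (0 : ℝ) < d := by positivity
  refine ⟨m + 1, ?_, ?_⟩
  · calc log d ≤ log (2 ^ (4 * (m + 1))) := log_le_log hd₀ hhigh.le
      _ = (m + 1 : ℕ) * (4 * log 2) := by rw [Real.log_pow]; push_cast; ring
      _ ≤ 3 * (m + 1 : ℕ) := by nlinarith [Real.log_two_lt_d9]
  · have hsqrt : (2 : ℝ) ^ (2 * m) ≤ √d :=
      Real.le_sqrt_of_sq_le (by rwa [← pow_mul, mul_comm, ← mul_assoc])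
    have hlog : log d ≤ 2 * √d := by
      have := Real.log_le_rpow_div hd₀.le (ε := 1 / 2) (by norm_num)
      rwa [← Real.sqrt_eq_rpow, div_div_eq_mul_div, div_one, mul_comm] at this
    have hy : (1 : ℝ) ≤ 2 ^ m := one_le_pow₀ one_le_two
    calc (4 * 2 ^ (m + 1) + 3 : ℝ) ^ 2 * log d ≤ 121 * 2 ^ (2 * m) * (2 * √d) := by
          gcongr
          rw [pow_succ 2 m, pow_mul']
          nlinarith
      _ ≤ 121 * √d * (2 * √d) := by gcongr
      _ = 242 * d := by rw [mul_mul_mul_comm, Real.mul_self_sqrt hd₀.le]; ring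

theorem SimpleGraph.Walk.IsPath.ne_of_length_pos {V : Type*} {G : SimpleGraph V} {u v : V}
    {p : G.Walk u v} (hp : p.IsPath) (h : 0 < p.length) : u ≠ v :=
  fun huv => not_nil_iff_lt_length.2 h (hp.nil_iff_eq.2 huv)

section Annulus

variable {V P : Type*} [DecidableEq V] [PseudoMetricSpace P] {G : SimpleGraph V} {u v : V}

/-- The last vertex is left out: on the paths of the theorem it is the only one whose coin may be
larger than the first one. -/
noncomputable def annulusSupport (c : V → P) (p : G.Walk u v) (o : P) (a b : ℝ) : Finset V :=
  {x ∈ p.support.toFinset.erase v | a ≤ dist (c x) o ∧ dist (c x) o < b}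

theorem sum_card_annulusSupport_le {p : G.Walk u v} (hp : p.IsPath) (c : V → P) (o : P)
    {s : ℕ → ℝ} (hs : Monotone s) (n : ℕ) :
    ∑ j ∈ range n, #(annulusSupport c p o (s j) (s (j + 1))) ≤ p.length := by
  rw [← card_biUnion]
  · calc _ ≤ #(p.support.toFinset.erase v) :=
          card_le_card (biUnion_subset.2 fun j _ => filter_subset _ _)
      _ = p.length := by
          rw [card_erase_of_mem (by simp), List.toFinset_card_of_nodup hp.support_nodup,
            p.length_support, Nat.add_sub_cancel]
  · intro j _ j' _ hjj'
    simp only [Function.onFun, disjoint_left, annulusSupport, mem_filter]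
    intro x hx hx'
    rcases lt_or_gt_of_ne hjj' with h | h <;> linarith [hs (Nat.succ_le_of_lt h)]

end Annulus

namespace IsCoinModel

variable {V : Type*} {G : SimpleGraph V} {c : V → EuclideanSpace ℝ (Fin 2)} {r : V → ℝ}

theorem smul (hG : IsCoinModel G c r) {a : ℝ} (ha : 0 < a) :
    IsCoinModel G (fun v => a • c v) (fun v => a * r v) := by
  have hball : ∀ (x : EuclideanSpace ℝ (Fin 2)) ρ, ball (a • x) (a * ρ) = a • ball x ρ :=
    fun x ρ => by rw [_root_.smul_ball ha.ne' x ρ, Real.norm_of_nonneg ha.le]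
  have hcball : ∀ (x : EuclideanSpace ℝ (Fin 2)) (ρ : ℝ), 0 ≤ ρ →
      closedBall (a • x) (a * ρ) = a • closedBall x ρ :=
    fun x ρ hρ => by rw [_root_.smul_closedBall a x hρ, Real.norm_of_nonneg ha.le]
  refine ⟨fun v => mul_pos ha (hG.r_pos v), fun x y hxy => ?_, fun x y hxy => ?_⟩
  · rw [hball, hball, Set.disjoint_iff_inter_eq_empty, ← Set.smul_set_inter₀ ha.ne',
      Set.smul_set_eq_empty, ← Set.disjoint_iff_inter_eq_empty]
    exact hG.disj x y hxy
  · rw [hcball _ _ (hG.r_pos x).le, hcball _ _ (hG.r_pos y).le, ← Set.smul_set_inter₀ ha.ne']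
    exact (hG.touch x y hxy).smul_set

theorem dist_le_add_of_adj (hG : IsCoinModel G c r) {x y : V} (h : G.Adj x y) :
    dist (c x) (c y) ≤ r x + r y := by
  obtain ⟨q, hqx, hqy⟩ := hG.touch x y h
  exact (dist_triangle_right _ _ q).trans
    (add_le_add (mem_closedBall'.1 hqx) (mem_closedBall'.1 hqy))

theorem sum_sq_le (hG : IsCoinModel G c r) {s : Finset V} {o : EuclideanSpace ℝ (Fin 2)}
    {R : ℝ} (hs : ∀ x ∈ s, ball (c x) (r x) ⊆ ball o R) : ∑ x ∈ s, r x ^ 2 ≤ R ^ 2 := by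
  rcases s.eq_empty_or_nonempty with rfl | ⟨x, hx⟩
  · simpa using sq_nonneg R
  have hR : 0 ≤ R := dist_nonneg.trans (mem_ball.1 (hs x hx (mem_ball_self (hG.r_pos x)))).le
  simpa using sum_pow_finrank_le_of_pairwiseDisjoint_ball (fun x _ => (hG.r_pos x).le) hR
    (fun x _ y _ h => hG.disj x y h) hs

theorem card_le_of_adj_near (hG : IsCoinModel G c r) {s : Finset V}
    {o : EuclideanSpace ℝ (Fin 2)} {R : ℝ} (hR : 0 ≤ R)
    (hs : ∀ v ∈ s, 1 ≤ r v ∧ ∃ y, G.Adj y v ∧ r y ≤ 1 ∧ dist (c y) o ≤ R) :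
    (#s : ℝ) ≤ (R + 3) ^ 2 := by
  have hz : ∀ v ∈ s, ∃ z, ball z 1 ⊆ ball (c v) (r v) ∧ ball z 1 ⊆ ball o (R + 3) := by
    intro v hv
    obtain ⟨hv₁, y, hyv, hy₁, hyo⟩ := hs v hv
    obtain ⟨q, hqy, hqv⟩ := hG.touch y v hyv
    obtain ⟨z, hzv, hzq⟩ := exists_ball_subset_ball_dist_le one_pos hv₁ hqv
    refine ⟨z, hzv, ball_subset_ball' ?_⟩
    linarith [dist_triangle4 z q (c y) o, mem_closedBall.1 hqy]
  choose! z hz using hz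
  simpa using sum_pow_finrank_le_of_pairwiseDisjoint_ball (s := s) (x := z) (ρ := fun _ => 1)
    (fun _ _ => zero_le_one) (by positivity)
    (fun v hv w hw hvw => (hG.disj v w hvw).mono (hz v hv).1 (hz w hw).1) fun v hv => (hz v hv).2

variable [DecidableEq V]

theorem le_sum_annulusSupport (hG : IsCoinModel G c r) {u v : V}
    {p : G.Walk u v} (hp : p.IsPath) (hsmall : ∀ x ∈ p.support, x ≠ v → r x ≤ 1)
    {o : EuclideanSpace ℝ (Fin 2)} {a b : ℝ} (hu : dist (c u) o ≤ a) {x : V}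
    (hx : x ∈ p.support) (hxv : x ≠ v) (hb : b ≤ dist (c x) o) :
    (b - a) / 2 - 1 ≤ ∑ y ∈ annulusSupport c p o a b, r y := by
  obtain ⟨n, rfl, hn⟩ := SimpleGraph.Walk.mem_support_iff_exists_getVert.1 hx
  have hnlt : n < p.length := hn.lt_of_ne (by rintro rfl; exact hxv p.getVert_length)
  have hne : ∀ t ≤ n, p.getVert t ≠ v := fun t ht => by
    rw [Ne, hp.getVert_eq_end_iff (by omega)]
    omega
  have hinj : Set.InjOn p.getVert (range n) := hp.getVert_injOn.mono fun t ht => by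
    rw [coe_range, Set.mem_Iio] at ht
    exact Set.mem_ofPred.2 (by omega)
  refine (le_sum_filter_of_crossing (f := fun t => dist (c (p.getVert t)) o)
    (g := fun t => r (p.getVert t)) (fun t => (hG.r_pos _).le)
    (fun t ht => hsmall _ (p.getVert_mem_support t) (hne t ht))
    (fun t ht => (abs_dist_sub_le _ _ _).trans
      ((dist_comm _ _).le.trans (hG.dist_le_add_of_adj (p.adj_getVert_succ (by omega)))))
    (by simpa using hu) hb).trans ?_
  rw [← sum_image (f := r) (hinj.mono (coe_subset.2 (filter_subset _ _)))]
  refine sum_le_sum_of_subset_of_nonneg (fun y hy => ?_) fun y _ _ => (hG.r_pos y).le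
  obtain ⟨t, ht, rfl⟩ := mem_image.1 hy
  rw [mem_filter, mem_range] at ht
  simp only [annulusSupport, mem_filter, mem_erase, List.mem_toFinset]
  exact ⟨⟨hne t (by omega), p.getVert_mem_support t⟩, ht.2⟩

variable {ι : Type*} {u : V} {w : ι → V} {p : ∀ i, G.Walk u (w i)}

theorem sum_sum_sq_annulusSupport_le (hG : IsCoinModel G c r)
    (hdisj : ∀ i j, i ≠ j → ∀ x, x ∈ (p i).support → x ∈ (p j).support → x = u)
    (hsmall : ∀ i, ∀ x ∈ (p i).support, x ≠ w i → r x ≤ 1) (s : Finset ι) {a b : ℝ}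
    (ha : 0 < a) :
    ∑ i ∈ s, ∑ x ∈ annulusSupport c (p i) (c u) a b, r x ^ 2 ≤ (b + 1) ^ 2 := by
  have hmem : ∀ i x, x ∈ annulusSupport c (p i) (c u) a b →
      x ∈ (p i).support ∧ r x ≤ 1 ∧ a ≤ dist (c x) (c u) ∧ dist (c x) (c u) < b := by
    intro i x hx
    simp only [annulusSupport, mem_filter, mem_erase, List.mem_toFinset] at hx
    exact ⟨hx.1.2, hsmall i x hx.1.2 hx.1.1, hx.2⟩
  have hpair : (s : Set ι).PairwiseDisjoint (fun i => annulusSupport c (p i) (c u) a b) := by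
    refine fun i _ j _ hij => disjoint_left.2 fun x hxi hxj => ?_
    obtain rfl := hdisj i j hij x (hmem i x hxi).1 (hmem j x hxj).1
    linarith [(hmem i x hxi).2.2.1, dist_self (c x)]
  rw [← sum_biUnion hpair]
  refine hG.sum_sq_le (o := c u) fun x hx => ball_subset_ball' ?_
  obtain ⟨i, -, hx⟩ := mem_biUnion.1 hx
  linarith [hmem i x hx]

theorem card_mul_le_of_far (hG : IsCoinModel G c r) {d J : ℕ} {s : Finset ι}
    (hp : ∀ i, (p i).IsPath) (hlen : ∀ i, (p i).length ≤ d)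
    (hdisj : ∀ i j, i ≠ j → ∀ x, x ∈ (p i).support → x ∈ (p j).support → x = u)
    (hsmall : ∀ i, ∀ x ∈ (p i).support, x ≠ w i → r x ≤ 1)
    (hfar : ∀ i ∈ s, ∃ x ∈ (p i).support, x ≠ w i ∧ 4 * 2 ^ J ≤ dist (c x) (c u)) :
    (#s : ℝ) * J ≤ 81 * d := by
  set S : ι → ℕ → Finset V := fun i j =>
    annulusSupport c (p i) (c u) (4 * 2 ^ j) (4 * 2 ^ (j + 1))
  have hcross : ∀ i ∈ s, ∀ j ∈ range J, (2 : ℝ) ^ j ≤ ∑ x ∈ S i j, r x := by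
    intro i hi j hj
    obtain ⟨x, hx, hxw, hxD⟩ := hfar i hi
    have hjJ : (4 : ℝ) * 2 ^ (j + 1) ≤ 4 * 2 ^ J :=
      mul_le_mul_of_nonneg_left (pow_le_pow_right₀ one_le_two (mem_range.1 hj)) (by norm_num)
    refine le_trans ?_ (hG.le_sum_annulusSupport (hp i) (hsmall i) (by simp) hx hxw
      (hjJ.trans hxD))
    linarith [one_le_pow₀ (one_le_two : (1 : ℝ) ≤ 2) (n := j), pow_succ (2 : ℝ) j]
  have hpos : ∀ i ∈ s, ∀ j ∈ range J, (0 : ℝ) < #(S i j) := fun i hi j hj =>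
    Nat.cast_pos.2 (card_pos.2 (nonempty_of_sum_ne_zero (f := r)
      ((pow_pos two_pos j).trans_le (hcross i hi j hj)).ne'))
  have hrow : ∀ i ∈ s, ∑ j ∈ range J, (#(S i j) : ℝ) ≤ d := fun i _ => by
    exact_mod_cast (sum_card_annulusSupport_le (hp i) c (c u)
      (fun a b h => by gcongr; exact one_le_two) J).trans (hlen i)
  have hcol : ∀ j ∈ range J, ∑ i ∈ s, (#(S i j) : ℝ)⁻¹ ≤ 81 := by
    intro j hj
    have harea := (sq_mul_sum_inv_card_le (by positivity) fun i hi => hcross i hi j hj).trans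
      (hG.sum_sum_sq_annulusSupport_le hdisj hsmall s (by positivity : (0 : ℝ) < 4 * 2 ^ j))
    have h9 : (4 * 2 ^ (j + 1) + 1 : ℝ) ^ 2 ≤ (2 ^ j) ^ 2 * 81 := by
      rw [pow_succ 2 j]
      nlinarith [one_le_pow₀ (one_le_two : (1 : ℝ) ≤ 2) (n := j)]
    exact le_of_mul_le_mul_left (harea.trans h9) (by positivity)
  have := card_mul_card_sq_le hpos (Nat.cast_nonneg d) hrow hcol
  rw [card_range] at this
  rcases J.eq_zero_or_pos with rfl | hJ
  · simp
  · nlinarith [(Nat.cast_pos.2 hJ : (0 : ℝ) < J)]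

theorem card_le_of_radius_le_one [Fintype ι] (hG : IsCoinModel G c r) {d : ℕ} (hd : 2 ≤ d)
    (hp : ∀ i, (p i).IsPath) (hlen : ∀ i, 1 ≤ (p i).length ∧ (p i).length ≤ d)
    (hdisj : ∀ i j, i ≠ j → ∀ x, x ∈ (p i).support → x ∈ (p j).support → x = u)
    (hsmall : ∀ i, ∀ x ∈ (p i).support, x ≠ w i → r x ≤ 1) (hlarge : ∀ i, 1 ≤ r (w i)) :
    (Fintype.card ι : ℝ) ≤ 485 * d / log d := by
  classical
  obtain ⟨J, hlogJ, hnearJ⟩ := exists_dyadic_scale hd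
  set far : Finset ι := {i | ∃ x ∈ (p i).support, x ≠ w i ∧ 4 * 2 ^ J ≤ dist (c x) (c u)}
  have hfar := hG.card_mul_le_of_far hp (fun i => (hlen i).2) hdisj hsmall (s := far)
    fun i hi => (mem_filter.1 hi).2
  have hne : ∀ i, (p i).penultimate ≠ w i := fun i => by
    rw [Ne, (hp i).getVert_eq_end_iff (by omega)]
    have := (hlen i).1
    omega
  have hwinj : Function.Injective w := fun i j hij => by_contra fun h =>
    (hp i).ne_of_length_pos (hlen i).1
      (hdisj i j h _ (p i).end_mem_support (by rw [hij]; exact (p j).end_mem_support)).symm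
  have hnear : (#farᶜ : ℝ) ≤ (4 * 2 ^ J + 3) ^ 2 := by
    rw [← card_image_of_injective _ hwinj]
    refine hG.card_le_of_adj_near (o := c u) (by positivity) fun v hv => ?_
    obtain ⟨i, hi, rfl⟩ := mem_image.1 hv
    refine ⟨hlarge i, _, (p i).adj_penultimate ?_,
      hsmall i _ ((p i).getVert_mem_support _) (hne i), ?_⟩
    · exact SimpleGraph.Walk.not_nil_iff_lt_length.2 (hlen i).1
    · simp only [far, mem_compl, mem_filter, mem_univ, true_and, not_exists, not_and,
        not_le] at hi
      exact (hi _ ((p i).getVert_mem_support _) (hne i)).le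
  have hlog : 0 < log d := log_pos (by exact_mod_cast hd)
  rw [le_div_iff₀ hlog, ← card_compl_add_card far]
  push_cast
  nlinarith [mul_le_mul_of_nonneg_right hnear hlog.le,
    mul_le_mul_of_nonneg_left hlogJ (Nat.cast_nonneg (α := ℝ) #far)]

end IsCoinModel

/-- Every Koebe ordering of a planar graph has `d`-admissibility at most `O(d / ln d)`:
any family of paths of length between 1 and `d`, starting at `u`, ending at a vertex `⪯ u`,
with internal vertices strictly `≻ u`, pairwise disjoint apart from sharing `u`,
has size at most `C·d/ln d`. -/
theorem koebe_admissibility_upper_bound :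
    ∃ C : ℝ, 0 < C ∧
      ∀ (d : ℕ), 2 ≤ d →
      ∀ (V : Type) [Fintype V] [LinearOrder V],
      ∀ (G : SimpleGraph V) (c : V → EuclideanSpace ℝ (Fin 2)) (r : V → ℝ),
        IsCoinModel G c r →
        (∀ a b : V, r b < r a → a ≤ b) →
        ∀ (u : V) (k : ℕ) (w : Fin k → V) (p : ∀ i, G.Walk u (w i)),
          (∀ i, (p i).IsPath) →
          (∀ i, 1 ≤ (p i).length ∧ (p i).length ≤ d) →
          (∀ i, w i ≤ u) →
          (∀ i, ∀ x ∈ (p i).support, x ≠ u → x ≠ w i → u < x) →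
          (∀ i j, i ≠ j → ∀ x, x ∈ (p i).support → x ∈ (p j).support → x = u) →
          (k : ℝ) ≤ C * d / Real.log d := by
  refine ⟨485, by norm_num, fun d hd V _ _ G c r hG hkoebe u k w p hpath hlen hw hint hdis => ?_⟩
  have hsmall : ∀ i, ∀ x ∈ (p i).support, x ≠ w i → r x ≤ r u := by
    intro i x hx hxw
    rcases eq_or_ne x u with rfl | hxu
    · rfl
    · exact le_of_not_gt fun h => (hint i x hx hxu hxw).not_ge (hkoebe x u h)
  have hlarge : ∀ i, r u ≤ r (w i) := fun i => le_of_not_gt fun h =>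
    (hpath i).ne_of_length_pos (hlen i).1 ((hw i).antisymm (hkoebe u (w i) h)).symm
  have hρ := hG.r_pos u
  simpa using (hG.smul (inv_pos.2 hρ)).card_le_of_radius_le_one hd hpath hlen hdis
    (fun i x hx hxw => by simpa [inv_mul_le_iff₀ hρ] using hsmall i x hx hxw)
    fun i => by simpa [le_inv_mul_iff₀ hρ] using hlarge i
end

section
/- There is an absolute constant c₀ > 0 such that the following holds. Let d ≥ 2 be an integer and let D_1, …, D_m ⊆ ℝ² (with 1 ≤ m ≤ d) be closed disks with radii ρ_1, …, ρ_m ∈ (0,1] satisfying ρ_m = 1, whose open interiors are pairwise disjoint and each disjoint from the open unit disk centered at the origin, such that D_1 intersects the closed unit disk centered at the origin and D_{i+1} intersects D_i for each 1 ≤ i ≤ m−1. Then μ(D_1 ∪ … ∪ D_m) ≥ c₀·(ln d)²/d. -/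
/-!
Write `sᵢ = ‖pᵢ‖` and `wᵢ = ρᵢ / sᵢ`. Disjointness from the unit disk gives `sᵢ ≥ 1 + ρᵢ`, so the
density is at least `1/(2sᵢ)²` on `Dᵢ` and `μ(⋃ Dᵢ) ≥ (π/4) ∑ wᵢ²`. Consecutive disks touch, so
`log sᵢ₊₁ - log sᵢ ≤ wᵢ + 3wᵢ₊₁` and, with `s₁ ≤ 2`, `log (sₘ/2) ≤ 4 ∑ wᵢ`; by Cauchy–Schwarz
`∑ wᵢ² ≥ log (sₘ/2)² / (16 d)`. The last disk has radius one, so also `∑ wᵢ² ≥ 1/sₘ²`. Whatever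
the value of `sₘ ≥ 2`, one of these two bounds is at least `(log d)² / (1024 d)`.
-/

open Metric MeasureTheory

/-- The measure on the plane with density `1/‖x‖²` with respect to Lebesgue measure. -/
noncomputable def mu : Measure (EuclideanSpace ℝ (Fin 2)) :=
  volume.withDensity fun x => ENNReal.ofReal (1 / ‖x‖ ^ 2)

open Real Finset

lemma log_sub_log_le_of_le_add {a b r r' : ℝ} (ha : 0 < a) (hb : 0 < b) (hr' : 0 ≤ r')
    (hra : 2 * r ≤ a) (hrb : 2 * r' ≤ b) (hab : b ≤ a + r + r') :
    log b - log a ≤ r / a + 3 * (r' / b) := by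
  have hb3 : b ≤ 3 * a := by linarith
  calc log b - log a = log (b / a) := (log_div hb.ne' ha.ne').symm
    _ ≤ b / a - 1 := log_le_sub_one_of_pos (by positivity)
    _ ≤ r / a + r' / a := by
        rw [← add_div, div_sub_one ha.ne']
        gcongr
        linarith
    _ ≤ r / a + 3 * (r' / b) := by
        gcongr r / a + ?_
        rw [← mul_div_assoc, div_le_div_iff₀ ha hb]
        nlinarith

lemma sub_le_mul_sum_of_succ_sub_le {f w : ℕ → ℝ} {a b : ℝ} {n : ℕ} (ha : 0 ≤ a) (hb : 0 ≤ b)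
    (hw : ∀ i < n + 1, 0 ≤ w i) (hstep : ∀ i < n, f (i + 1) - f i ≤ a * w i + b * w (i + 1)) :
    f n - f 0 ≤ (a + b) * ∑ i ∈ range (n + 1), w i := by
  have hinit : ∑ i ∈ range n, w i ≤ ∑ i ∈ range (n + 1), w i := by
    rw [sum_range_succ]
    linarith [hw n n.lt_succ_self]
  have htail : ∑ i ∈ range n, w (i + 1) ≤ ∑ i ∈ range (n + 1), w i := by
    rw [sum_range_succ']
    linarith [hw 0 n.succ_pos]
  calc f n - f 0 = ∑ i ∈ range n, (f (i + 1) - f i) := (sum_range_sub f n).symm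
    _ ≤ ∑ i ∈ range n, (a * w i + b * w (i + 1)) :=
        sum_le_sum fun i hi => hstep i (mem_range.1 hi)
    _ = a * ∑ i ∈ range n, w i + b * ∑ i ∈ range n, w (i + 1) := by
        rw [sum_add_distrib, mul_sum, mul_sum]
    _ ≤ (a + b) * ∑ i ∈ range (n + 1), w i := by
        rw [add_mul]
        exact add_le_add (mul_le_mul_of_nonneg_left hinit ha) (mul_le_mul_of_nonneg_left htail hb)

lemma log_sq_div_le_max {d S : ℝ} (hd : 1 ≤ d) (hS : 2 ≤ S) :
    log d ^ 2 / (1024 * d) ≤ max (log (S / 2) ^ 2 / (16 * d)) (1 / S ^ 2) := by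
  set L := log d with hL
  have hL0 : 0 ≤ L := log_nonneg hd
  have hd0 : 0 < d := by linarith
  rcases le_or_gt (L / 8) (log (S / 2)) with hlarge | hsmall
  · refine le_max_of_le_left ?_
    have := pow_le_pow_left₀ (by positivity) hlarge 2
    rw [div_le_div_iff₀ (by positivity) (by positivity)]
    nlinarith
  · refine le_max_of_le_right ?_
    have hS' : S < 2 * exp (L / 8) := by
      have := exp_lt_exp.2 hsmall
      rw [exp_log (by linarith)] at this
      linarith
    have hquad : L ^ 2 ≤ 256 * exp (3 * L / 4) := by
      have := pow_div_factorial_le_exp (3 * L / 4) (by positivity) 2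
      norm_num [Nat.factorial] at this
      nlinarith
    have hkey : L ^ 2 * (2 * exp (L / 8)) ^ 2 ≤ 1024 * d := by
      calc L ^ 2 * (2 * exp (L / 8)) ^ 2 = 4 * L ^ 2 * exp (L / 4) := by
            rw [mul_pow, sq (exp _), ← exp_add]
            ring_nf
        _ ≤ 4 * (256 * exp (3 * L / 4)) * exp (L / 4) := by gcongr
        _ = 1024 * exp (3 * L / 4 + L / 4) := by rw [exp_add]; ring
        _ = 1024 * d := by rw [show 3 * L / 4 + L / 4 = L by ring, hL, exp_log hd0]
    have hS2 := mul_le_mul_of_nonneg_left (pow_le_pow_left₀ (by linarith) hS'.le 2) (sq_nonneg L)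
    rw [div_le_div_iff₀ (by positivity) (by positivity)]
    linarith

lemma log_sq_div_le_sum_sq_of_chain {d : ℝ} {n : ℕ} {s ρ : ℕ → ℝ} (hd : 1 ≤ d)
    (hnd : (n : ℝ) + 1 ≤ d) (hρ : ∀ i < n + 1, 0 < ρ i) (hρs : ∀ i < n + 1, 2 * ρ i ≤ s i)
    (hρn : ρ n = 1) (hs0 : s 0 ≤ 2) (hstep : ∀ i < n, s (i + 1) ≤ s i + ρ i + ρ (i + 1)) :
    log d ^ 2 / (1024 * d) ≤ ∑ i ∈ range (n + 1), (ρ i / s i) ^ 2 := by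
  have hs : ∀ i < n + 1, 0 < s i := fun i hi => by linarith [hρ i hi, hρs i hi]
  have hsn : 2 ≤ s n := by simpa [hρn] using hρs n n.lt_succ_self
  set A := ∑ i ∈ range (n + 1), ρ i / s i
  set T := ∑ i ∈ range (n + 1), (ρ i / s i) ^ 2
  have hA : log (s n / 2) ≤ 4 * A := by
    have hlog := sub_le_mul_sum_of_succ_sub_le (f := fun i => log (s i)) (a := 1) (b := 3)
      (by norm_num) (by norm_num) (fun i hi => (div_pos (hρ i hi) (hs i hi)).le)
      (fun i hi => by
        simpa using log_sub_log_le_of_le_add (hs i (by omega)) (hs (i + 1) (by omega))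
          (hρ (i + 1) (by omega)).le (hρs i (by omega)) (hρs (i + 1) (by omega)) (hstep i hi))
    have hlog0 := log_le_log (hs 0 n.succ_pos) hs0
    rw [log_div (by linarith) two_ne_zero]
    linarith
  have hCS : A ^ 2 ≤ d * T := by
    refine sq_sum_le_card_mul_sum_sq.trans ?_
    simp only [card_range, Nat.cast_add, Nat.cast_one]
    gcongr
  have hlast : 1 / s n ^ 2 ≤ T := by
    simpa [T, hρn, div_pow] using
      single_le_sum (fun i _ => sq_nonneg (ρ i / s i)) (mem_range.2 n.lt_succ_self)
  refine (log_sq_div_le_max hd hsn).trans (max_le ?_ hlast)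
  have hlog_nonneg : 0 ≤ log (s n / 2) := log_nonneg (by linarith)
  rw [div_le_iff₀ (by positivity)]
  nlinarith

lemma mu_ball_ge {p : EuclideanSpace ℝ (Fin 2)} {r : ℝ} (hr : 0 ≤ r) (hrp : r ≤ ‖p‖) :
    ENNReal.ofReal (π / 4 * (r / ‖p‖) ^ 2) ≤ mu (ball p r) := by
  have hdens : ∀ x ∈ ball p r,
      ENNReal.ofReal (1 / (2 * ‖p‖) ^ 2) ≤ ENNReal.ofReal (1 / ‖x‖ ^ 2) := by
    intro x hx
    rw [mem_ball, dist_eq_norm] at hx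
    have hx0 : 0 < ‖x‖ := by linarith [norm_sub_norm_le p x, norm_sub_rev p x]
    have hx2 : ‖x‖ ≤ 2 * ‖p‖ := by linarith [norm_le_norm_add_norm_sub' x p]
    gcongr
  calc ENNReal.ofReal (π / 4 * (r / ‖p‖) ^ 2)
      = ENNReal.ofReal (1 / (2 * ‖p‖) ^ 2) * volume (ball p r) := by
        rw [EuclideanSpace.volume_ball_fin_two, ← ENNReal.ofReal_pow hr, ← ENNReal.ofReal_mul (by positivity),
          ← ENNReal.ofReal_mul (by positivity)]
        ring_nf
    _ = ∫⁻ _ in ball p r, ENNReal.ofReal (1 / (2 * ‖p‖) ^ 2) := (setLIntegral_const _ _).symm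
    _ ≤ ∫⁻ x in ball p r, ENNReal.ofReal (1 / ‖x‖ ^ 2) := setLIntegral_mono' measurableSet_ball hdens
    _ = mu (ball p r) := (withDensity_apply _ measurableSet_ball).symm

lemma ofReal_sum_le_mu_biUnion_closedBall {ι : Type*} {t : Finset ι}
    {p : ι → EuclideanSpace ℝ (Fin 2)} {r : ι → ℝ} (hr : ∀ i ∈ t, 0 ≤ r i ∧ r i ≤ ‖p i‖)
    (hdisj : (t : Set ι).PairwiseDisjoint fun i => ball (p i) (r i)) :
    ENNReal.ofReal (π / 4 * ∑ i ∈ t, (r i / ‖p i‖) ^ 2) ≤ mu (⋃ i ∈ t, closedBall (p i) (r i)) :=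
  calc ENNReal.ofReal (π / 4 * ∑ i ∈ t, (r i / ‖p i‖) ^ 2)
      = ∑ i ∈ t, ENNReal.ofReal (π / 4 * (r i / ‖p i‖) ^ 2) := by
        rw [mul_sum, ENNReal.ofReal_sum_of_nonneg fun i _ => by positivity]
    _ ≤ ∑ i ∈ t, mu (ball (p i) (r i)) := sum_le_sum fun i hi => mu_ball_ge (hr i hi).1 (hr i hi).2
    _ = mu (⋃ i ∈ t, ball (p i) (r i)) :=
        (measure_biUnion_finset hdisj fun _ _ => measurableSet_ball).symm
    _ ≤ mu (⋃ i ∈ t, closedBall (p i) (r i)) :=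
        measure_mono (Set.iUnion₂_mono fun _ _ => ball_subset_closedBall)

/-- A chain of at most `d` closed disks of radii in `(0,1]`, with pairwise disjoint
interiors, interiors disjoint from the open unit disk at the origin, the first disk
touching the closed unit disk at the origin, consecutive disks touching, and the last
disk of radius exactly `1`, has `μ`-measure at least `c₀·(ln d)²/d`. -/
theorem mu_chain_lower_bound :
    ∃ c₀ : ℝ, 0 < c₀ ∧
      ∀ (d m : ℕ), 2 ≤ d → 1 ≤ m → m ≤ d →
      ∀ (p : ℕ → EuclideanSpace ℝ (Fin 2)) (ρ : ℕ → ℝ),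
        (∀ i < m, 0 < ρ i ∧ ρ i ≤ 1) →
        ρ (m - 1) = 1 →
        (∀ i < m, ∀ j < m, i ≠ j → Disjoint (ball (p i) (ρ i)) (ball (p j) (ρ j))) →
        (∀ i < m, Disjoint (ball (p i) (ρ i))
          (ball (0 : EuclideanSpace ℝ (Fin 2)) 1)) →
        (closedBall (p 0) (ρ 0) ∩
          closedBall (0 : EuclideanSpace ℝ (Fin 2)) 1).Nonempty →
        (∀ i, i + 1 < m →
          (closedBall (p (i + 1)) (ρ (i + 1)) ∩ closedBall (p i) (ρ i)).Nonempty) →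
        ENNReal.ofReal (c₀ * (Real.log d) ^ 2 / d) ≤
          mu (⋃ i ∈ Finset.range m, closedBall (p i) (ρ i)) := by
  refine ⟨π / 4096, by positivity, ?_⟩
  intro d m hd hm hmd p ρ hρ hρm hdisj hdisj0 hfirst hcons
  obtain ⟨n, rfl⟩ : ∃ n, m = n + 1 := ⟨m - 1, by omega⟩
  have hsep : ∀ i < n + 1, 1 + ρ i ≤ ‖p i‖ := fun i hi => by
    simpa [add_comm] using (disjoint_ball_ball_iff (hρ i hi).1 one_pos).1 (hdisj0 i hi)
  have hs0 : ‖p 0‖ ≤ 2 := by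
    linarith [dist_le_add_of_nonempty_closedBall_inter_closedBall hfirst, dist_zero_right (p 0),
      (hρ 0 n.succ_pos).2]
  have hstep : ∀ i < n, ‖p (i + 1)‖ ≤ ‖p i‖ + ρ i + ρ (i + 1) := fun i hi => by
    linarith [dist_le_add_of_nonempty_closedBall_inter_closedBall (hcons i (by omega)),
      norm_le_norm_add_norm_sub' (p (i + 1)) (p i), dist_eq_norm (p (i + 1)) (p i)]
  have hT := log_sq_div_le_sum_sq_of_chain (d := d) (s := fun i => ‖p i‖)
    (by exact_mod_cast one_le_two.trans hd) (by exact_mod_cast hmd) (fun i hi => (hρ i hi).1)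
    (fun i hi => by linarith [hsep i hi, (hρ i hi).2]) (by simpa using hρm) hs0 hstep
  have hmu := ofReal_sum_le_mu_biUnion_closedBall (t := range (n + 1)) (p := p) (r := ρ)
    (fun i hi => ⟨(hρ i (mem_range.1 hi)).1.le, by linarith [hsep i (mem_range.1 hi)]⟩)
    (fun i hi j hj hij => hdisj i (mem_range.1 hi) j (mem_range.1 hj) hij)
  refine le_trans (ENNReal.ofReal_le_ofReal ?_) hmu
  calc π / 4096 * log d ^ 2 / d = π / 4 * (log d ^ 2 / (1024 * d)) := by ring
    _ ≤ π / 4 * ∑ i ∈ range (n + 1), (ρ i / ‖p i‖) ^ 2 := by gcongr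
end

section
/- Let D ⊆ ℝ² be a closed disk of radius ρ > 0 whose center is at distance a from the origin, and suppose the origin does not belong to D. Then μ(D) ≥ (π/4)·ρ²/a². -/
open Metric MeasureTheory

/-- A closed disk of radius `ρ > 0` whose center is at distance `a` from the origin and
which avoids the origin has `μ`-measure at least `(π/4)·ρ²/a²`. -/
theorem mu_disk_lower_bound (p : EuclideanSpace ℝ (Fin 2)) (ρ a : ℝ) (hρ : 0 < ρ)
    (ha : dist p 0 = a)
    (h0 : (0 : EuclideanSpace ℝ (Fin 2)) ∉ closedBall p ρ) :
    ENNReal.ofReal (Real.pi / 4 * ρ ^ 2 / a ^ 2) ≤ mu (closedBall p ρ) := by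
  have hpa : ρ < a := by
    rw [Metric.mem_closedBall, dist_comm, ha] at h0
    linarith [not_le.mp h0]
  have ha0 : 0 < a := hρ.trans hpa
  have key : ∀ x ∈ closedBall p ρ,
      ENNReal.ofReal (1 / (2 * a) ^ 2) ≤ ENNReal.ofReal (1 / ‖x‖ ^ 2) := by
    intro x hx
    apply ENNReal.ofReal_le_ofReal
    have hx0 : 0 < ‖x‖ := by
      rcases eq_or_ne x 0 with rfl | h
      · exact absurd hx h0
      · simpa [norm_pos_iff] using h
    have hxn : ‖x‖ ≤ 2 * a := by
      have hd : dist x p ≤ ρ := hx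
      calc ‖x‖ = dist x 0 := (dist_zero_right x).symm
        _ ≤ dist x p + dist p 0 := dist_triangle _ _ _
        _ ≤ 2 * a := by rw [ha]; linarith
    exact one_div_le_one_div_of_le (by positivity) (by nlinarith)
  have hmeas : mu (closedBall p ρ) = ∫⁻ x in closedBall p ρ, ENNReal.ofReal (1 / ‖x‖ ^ 2) := by
    rw [mu, withDensity_apply _ measurableSet_closedBall]
  have hvol : volume (closedBall p ρ) = ENNReal.ofReal (ρ ^ 2) * ENNReal.ofReal Real.pi := by
    rw [EuclideanSpace.volume_closedBall]
    have : (Fintype.card (Fin 2) : ℝ) = 2 := by simp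
    simp only [Fintype.card_fin]
    rw [show ((2:ℕ):ℝ)/2 + 1 = 2 by norm_num, Real.Gamma_two,
      Real.sq_sqrt Real.pi_nonneg, ← ENNReal.ofReal_pow hρ.le]
    ring_nf
  have hlow : ENNReal.ofReal (1 / (2 * a) ^ 2) * volume (closedBall p ρ)
      ≤ ∫⁻ x in closedBall p ρ, ENNReal.ofReal (1 / ‖x‖ ^ 2) := by
    rw [← setLIntegral_const]
    exact setLIntegral_mono (by measurability) key
  rw [hmeas]
  refine le_trans ?_ hlow
  rw [hvol, ← ENNReal.ofReal_mul (by positivity), ← ENNReal.ofReal_mul (by positivity)]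
  apply ENNReal.ofReal_le_ofReal
  apply le_of_eq
  field_simp
  ring
end

section
/- There is an absolute constant c > 0 such that for every integer ℓ ≥ 2 and all reals ρ_1, …, ρ_{ℓ+1} ∈ [0,1] with ρ_{ℓ+1} = 1, setting x_i = ρ_1 + ρ_2 + … + ρ_i for 1 ≤ i ≤ ℓ+1, one has Σ_{i=1}^{ℓ+1} ρ_i²/(1+x_i)² ≥ c·(ln ℓ)²/ℓ. -/
/-!
Telescoping `log (1 + x_i) - log (1 + x_{i-1}) ≤ 2 ρ_i / (1 + x_i)` and Cauchy–Schwarz give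
`ℓ · Σ_{i ≤ ℓ} ρ_i² / (1 + x_i)² ≥ log (1 + x_ℓ)² / 4`, while the last term equals
`1 / (2 + x_ℓ)²`. If `(1 + x_ℓ)⁴ ≥ ℓ` the first bound is at least `(log ℓ)² / (64 ℓ)`;
otherwise the last term exceeds `1 / (4 √ℓ) ≥ (log ℓ)² / (64 ℓ)`, as `log ℓ ≤ 4 ℓ^{1/4}`.
-/

open Real Finset

lemma log_sub_log_le_two_mul_sub_div {a b : ℝ} (ha : 0 < a) (hab : a ≤ b) (hb : b ≤ 2 * a) :
    log b - log a ≤ 2 * ((b - a) / b) := by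
  have hb0 : 0 < b := ha.trans_le hab
  calc log b - log a = log (b / a) := (log_div hb0.ne' ha.ne').symm
    _ ≤ b / a - 1 := log_le_sub_one_of_pos (div_pos hb0 ha)
    _ = (b - a) / a := by field_simp
    _ ≤ 2 * ((b - a) / b) := by
      rw [← mul_div_assoc, div_le_div_iff₀ ha hb0]
      nlinarith

lemma log_one_add_sum_Icc_le_two_mul_sum (ρ : ℕ → ℝ) (n : ℕ)
    (hρ : ∀ i ∈ Icc 1 n, ρ i ∈ Set.Icc (0 : ℝ) 1) :
    log (1 + ∑ j ∈ Icc 1 n, ρ j) ≤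
      2 * ∑ i ∈ Icc 1 n, ρ i / (1 + ∑ j ∈ Icc 1 i, ρ j) := by
  induction n with
  | zero => simp
  | succ n ih =>
    have hρ' : ∀ i ∈ Icc 1 n, ρ i ∈ Set.Icc (0 : ℝ) 1 := fun i hi =>
      hρ i (Icc_subset_Icc_right n.le_succ hi)
    obtain ⟨h0, h1⟩ := hρ (n + 1) (right_mem_Icc.mpr n.succ_pos)
    have hsum_nonneg : 0 ≤ ∑ j ∈ Icc 1 n, ρ j := sum_nonneg fun j hj => (hρ' j hj).1
    have hsucc : ∑ j ∈ Icc 1 (n + 1), ρ j = ∑ j ∈ Icc 1 n, ρ j + ρ (n + 1) :=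
      sum_Icc_succ_top (Nat.le_add_left 1 n) ρ
    have hstep := log_sub_log_le_two_mul_sub_div (a := 1 + ∑ j ∈ Icc 1 n, ρ j)
      (b := 1 + ∑ j ∈ Icc 1 (n + 1), ρ j) (by positivity) (by linarith) (by linarith)
    rw [sum_Icc_succ_top (Nat.le_add_left 1 n) (fun i => ρ i / (1 + ∑ j ∈ Icc 1 i, ρ j))]
    rw [hsucc, add_sub_add_left_eq_sub, add_sub_cancel_left, ← hsucc] at hstep
    linarith [ih hρ']

lemma log_sq_le_card_mul_sum_sq (ρ : ℕ → ℝ) (n : ℕ)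
    (hρ : ∀ i ∈ Icc 1 n, ρ i ∈ Set.Icc (0 : ℝ) 1) :
    log (1 + ∑ j ∈ Icc 1 n, ρ j) ^ 2 ≤
      4 * n * ∑ i ∈ Icc 1 n, ρ i ^ 2 / (1 + ∑ j ∈ Icc 1 i, ρ j) ^ 2 := by
  have hlog_nonneg : 0 ≤ log (1 + ∑ j ∈ Icc 1 n, ρ j) :=
    log_nonneg (le_add_of_nonneg_right (sum_nonneg fun j hj => (hρ j hj).1))
  have hcs := sq_sum_le_card_mul_sum_sq (s := Icc 1 n)
    (f := fun i => ρ i / (1 + ∑ j ∈ Icc 1 i, ρ j))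
  simp only [Nat.card_Icc, add_tsub_cancel_right, div_pow] at hcs
  calc log (1 + ∑ j ∈ Icc 1 n, ρ j) ^ 2
      ≤ (2 * ∑ i ∈ Icc 1 n, ρ i / (1 + ∑ j ∈ Icc 1 i, ρ j)) ^ 2 :=
        pow_le_pow_left₀ hlog_nonneg (log_one_add_sum_Icc_le_two_mul_sum ρ n hρ) 2
    _ ≤ 4 * n * ∑ i ∈ Icc 1 n, ρ i ^ 2 / (1 + ∑ j ∈ Icc 1 i, ρ j) ^ 2 := by
        linarith

lemma log_pow_four_le {x : ℝ} (hx : 1 ≤ x) : log x ^ 4 ≤ 256 * x := by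
  have h := log_le_rpow_div (x := x) (ε := 1 / 4) (by linarith) (by norm_num)
  calc log x ^ 4 ≤ (x ^ (1 / 4 : ℝ) / (1 / 4)) ^ 4 := pow_le_pow_left₀ (log_nonneg hx) h 4
    _ = 256 * x := by
      rw [div_pow, ← rpow_natCast, ← rpow_mul (by linarith)]
      norm_num
      ring

lemma log_sq_div_le_add_inv_sq {ℓ t S : ℝ} (hℓ : 1 ≤ ℓ) (ht : 1 ≤ t) (hS0 : 0 ≤ S)
    (hS : log t ^ 2 ≤ 4 * ℓ * S) : 1 / 64 * log ℓ ^ 2 / ℓ ≤ S + 1 / (1 + t) ^ 2 := by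
  have hℓ0 : 0 < ℓ := by linarith
  rcases le_or_gt ℓ (t ^ 4) with hlarge | hsmall
  · have hlog : log ℓ ≤ 4 * log t := by
      simpa [log_pow] using log_le_log hℓ0 hlarge
    have hlog_sq := pow_le_pow_left₀ (log_nonneg hℓ) hlog 2
    calc 1 / 64 * log ℓ ^ 2 / ℓ ≤ S := by
          rw [div_le_iff₀ hℓ0]
          nlinarith
      _ ≤ S + 1 / (1 + t) ^ 2 := le_add_of_nonneg_right (by positivity)
  · have hsq : (log ℓ ^ 2 * (1 + t) ^ 2) ^ 2 ≤ (64 * ℓ) ^ 2 := by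
      have h16 : (1 + t) ^ 4 ≤ 16 * ℓ := by nlinarith [sq_nonneg (t - 1), sq_nonneg t]
      calc (log ℓ ^ 2 * (1 + t) ^ 2) ^ 2 = log ℓ ^ 4 * (1 + t) ^ 4 := by ring
        _ ≤ (256 * ℓ) * (16 * ℓ) :=
          mul_le_mul (log_pow_four_le hℓ) h16 (by positivity) (by positivity)
        _ = (64 * ℓ) ^ 2 := by ring
    have h64 := (pow_le_pow_iff_left₀ (by positivity) (by positivity) two_ne_zero).mp hsq
    calc 1 / 64 * log ℓ ^ 2 / ℓ ≤ 1 / (1 + t) ^ 2 := by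
          rw [div_le_div_iff₀ hℓ0 (by positivity)]
          linarith
      _ ≤ S + 1 / (1 + t) ^ 2 := le_add_of_nonneg_left hS0

/-- For reals `ρ_1, …, ρ_{ℓ+1} ∈ [0,1]` with `ρ_{ℓ+1} = 1` and partial sums
`x_i = ρ_1 + … + ρ_i`, the sum `Σ ρ_i²/(1+x_i)²` is at least `c·(ln ℓ)²/ℓ`. -/
theorem sum_sq_partial_lower_bound :
    ∃ c : ℝ, 0 < c ∧
      ∀ (ℓ : ℕ), 2 ≤ ℓ →
      ∀ ρ : ℕ → ℝ,
        (∀ i, 1 ≤ i → i ≤ ℓ + 1 → ρ i ∈ Set.Icc (0 : ℝ) 1) →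
        ρ (ℓ + 1) = 1 →
        c * (Real.log ℓ) ^ 2 / ℓ ≤
          ∑ i ∈ Finset.Icc 1 (ℓ + 1),
            (ρ i) ^ 2 / (1 + ∑ j ∈ Finset.Icc 1 i, ρ j) ^ 2 := by
  refine ⟨1 / 64, by norm_num, fun ℓ hℓ ρ hρ hlast => ?_⟩
  have hρ' : ∀ i ∈ Icc 1 ℓ, ρ i ∈ Set.Icc (0 : ℝ) 1 := fun i hi =>
    hρ i (mem_Icc.1 hi).1 ((mem_Icc.1 hi).2.trans ℓ.le_succ)
  have hsum_last : ∑ j ∈ Icc 1 (ℓ + 1), ρ j = 1 + ∑ j ∈ Icc 1 ℓ, ρ j := by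
    rw [sum_Icc_succ_top (Nat.le_add_left 1 ℓ), hlast, add_comm]
  rw [sum_Icc_succ_top (Nat.le_add_left 1 ℓ)
    (fun i => ρ i ^ 2 / (1 + ∑ j ∈ Icc 1 i, ρ j) ^ 2), hsum_last, hlast, one_pow]
  exact log_sq_div_le_add_inv_sq (by exact_mod_cast (by omega : 1 ≤ ℓ))
    (le_add_of_nonneg_right (sum_nonneg fun j hj => (hρ' j hj).1))
    (sum_nonneg fun i _ => by positivity) (log_sq_le_card_mul_sum_sq ρ ℓ hρ')
end

section
/- Let d ∈ ℕ, let G be a finite simple graph admitting a coin model (c, r), and let ⪯ be a Koebe ordering of G with respect to (c, r). Then for every vertex u of G, |SReach_d[u]| ≤ (2d+1)². -/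
/-!
Let `ρ = r u`. A Koebe ordering makes the coin of every `w ∈ SReach_d[u]` at least as large as
`u`'s, and every other coin on the path from `u` to `w` at most as large. Each edge of the path
therefore moves the center by at most `2ρ`, and the last edge reaches a disk of radius `ρ` inside
the coin of `w` whose center is within `2dρ` of `c u`. These disks are pairwise disjoint and lie
in the disk of radius `(2d+1)ρ` around `c u`, so comparing areas bounds their number by `(2d+1)²`.
-/

open Metric

/-- The set of vertices strongly `d`-reachable from `u`: vertices `w ⪯ u` joined to `u`
by a path of length at most `d` all of whose internal vertices are strictly `≻ u`. -/
def SReach {V : Type*} [LinearOrder V] (G : SimpleGraph V) (d : ℕ) (u : V) : Set V :=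
  {w | w ≤ u ∧ ∃ p : G.Walk u w, p.IsPath ∧ p.length ≤ d ∧
    ∀ x ∈ p.support, x ≠ u → x ≠ w → u < x}

open MeasureTheory Module
open scoped ENNReal Finset Pointwise

section Packing

variable {E ι : Type*} [NormedAddCommGroup E] [NormedSpace ℝ E] [FiniteDimensional ℝ E]
  [MeasurableSpace E] [BorelSpace E]

theorem card_mul_pow_finrank_le_of_pairwiseDisjoint_ball {s : Finset ι} {F : ι → E} {x : E}
    {ρ R : ℝ} (hρ : 0 < ρ) (hR : 0 < R)
    (hdisj : (s : Set ι).PairwiseDisjoint (fun i ↦ ball (F i) ρ))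
    (hsub : ∀ i ∈ s, ball (F i) ρ ⊆ ball x R) :
    (#s : ℝ) * ρ ^ finrank ℝ E ≤ R ^ finrank ℝ E := by
  set μ : Measure E := Measure.addHaar
  have hunit₀ : μ (ball 0 1) ≠ 0 := (measure_ball_pos μ _ one_pos).ne'
  have hunit : μ (ball 0 1) ≠ ⊤ := measure_ball_lt_top.ne
  have hvol : (#s : ℝ≥0∞) * ENNReal.ofReal (ρ ^ finrank ℝ E) * μ (ball 0 1)
      ≤ ENNReal.ofReal (R ^ finrank ℝ E) * μ (ball 0 1) :=
    calc (#s : ℝ≥0∞) * ENNReal.ofReal (ρ ^ finrank ℝ E) * μ (ball 0 1)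
        = ∑ i ∈ s, μ (ball (F i) ρ) := by
          simp [Measure.addHaar_ball_of_pos μ _ hρ, mul_assoc]
      _ = μ (⋃ i ∈ s, ball (F i) ρ) :=
          (measure_biUnion_finset hdisj fun _ _ ↦ isOpen_ball.measurableSet).symm
      _ ≤ μ (ball x R) := measure_mono (Set.iUnion₂_subset hsub)
      _ = ENNReal.ofReal (R ^ finrank ℝ E) * μ (ball 0 1) := Measure.addHaar_ball_of_pos μ _ hR
  rw [ENNReal.mul_le_mul_iff_left hunit₀ hunit, ← ENNReal.ofReal_natCast,
    ← ENNReal.ofReal_mul (Nat.cast_nonneg _)] at hvol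
  exact (ENNReal.ofReal_le_ofReal_iff (by positivity)).mp hvol

end Packing

theorem exists_dist_le_sub_and_dist_le {E : Type*} [NormedAddCommGroup E] [NormedSpace ℝ E]
    [ProperSpace E] {x y : E} {δ R : ℝ} (hδ : 0 ≤ δ) (hδR : δ ≤ R)
    (hy : dist y x ≤ R) :
    ∃ q, dist q x ≤ R - δ ∧ dist q y ≤ δ := by
  have : y ∈ closedBall x (R - δ) + closedBall (0 : E) δ := by
    rw [closedBall_add_closedBall (sub_nonneg.2 hδR) hδ, add_zero, sub_add_cancel]
    exact hy
  obtain ⟨q, hq, v, hv, rfl⟩ := this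
  refine ⟨q, hq, ?_⟩
  simpa [dist_eq_norm] using hv

theorem antitone_of_lt_imp_le {V : Type*} [LinearOrder V] {r : V → ℝ}
    (hr : ∀ a b : V, r b < r a → a ≤ b) : Antitone r :=
  fun a b hab ↦ not_lt.1 fun h ↦ h.ne (congrArg r (le_antisymm hab (hr b a h)))

namespace IsCoinModel

variable {V : Type*} {G : SimpleGraph V} {c : V → EuclideanSpace ℝ (Fin 2)} {r : V → ℝ}

theorem dist_le_of_adj (hcm : IsCoinModel G c r) {a b : V} (hab : G.Adj a b) :
    dist (c a) (c b) ≤ r a + r b := by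
  obtain ⟨p, hpa, hpb⟩ := hcm.touch a b hab
  exact (dist_triangle_right _ _ p).trans
    (add_le_add (mem_closedBall'.1 hpa) (mem_closedBall'.1 hpb))

theorem exists_dist_le_of_adj (hcm : IsCoinModel G c r) {ρ : ℝ} {a b : V} (hab : G.Adj a b)
    (ha : r a ≤ ρ) (hb : ρ ≤ r b) :
    ∃ q, dist q (c b) ≤ r b - ρ ∧ dist (c a) q ≤ 2 * ρ := by
  obtain ⟨p, hpa, hpb⟩ := hcm.touch a b hab
  obtain ⟨q, hqb, hqp⟩ :=
    exists_dist_le_sub_and_dist_le ((hcm.r_pos a).le.trans ha) hb (mem_closedBall.1 hpb)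
  refine ⟨q, hqb, ?_⟩
  calc dist (c a) q ≤ dist (c a) p + dist q p := dist_triangle_right _ _ p
    _ ≤ 2 * ρ := by linarith [mem_closedBall'.1 hpa]

theorem exists_dist_le_of_walk (hcm : IsCoinModel G c r) {ρ : ℝ} (hρ : 0 ≤ ρ) {a w : V}
    (p : G.Walk a w) (hw : ρ ≤ r w) (hsmall : ∀ x ∈ p.support, x ≠ w → r x ≤ ρ) :
    ∃ q, dist q (c w) ≤ r w - ρ ∧ dist (c a) q ≤ 2 * p.length * ρ := by
  induction p with
  | @nil v => exact ⟨c v, by simpa using hw, by simp⟩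
  | @cons a b w hab p ih =>
    by_cases haw : a = w
    · subst haw
      exact ⟨c a, by simpa using hw, by simp only [dist_self]; positivity⟩
    have ha : r a ≤ ρ := hsmall a p.support.mem_cons_self haw
    by_cases hbw : b = w
    · subst hbw
      obtain ⟨q, hqb, hqa⟩ := hcm.exists_dist_le_of_adj hab ha hw
      refine ⟨q, hqb, hqa.trans ?_⟩
      rw [SimpleGraph.Walk.length_cons]
      gcongr
      simp
    have hb : r b ≤ ρ := hsmall b (List.mem_cons_of_mem _ p.start_mem_support) hbw
    obtain ⟨q, hqw, hbq⟩ := ih hw fun x hx ↦ hsmall x (List.mem_cons_of_mem _ hx)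
    refine ⟨q, hqw, ?_⟩
    calc dist (c a) q ≤ dist (c a) (c b) + dist (c b) q := dist_triangle _ _ _
      _ ≤ (r a + r b) + 2 * p.length * ρ := add_le_add (hcm.dist_le_of_adj hab) hbq
      _ ≤ 2 * (p.cons hab).length * ρ := by
        rw [SimpleGraph.Walk.length_cons]; push_cast; linarith

theorem exists_ball_subset_of_mem_SReach [LinearOrder V] (hcm : IsCoinModel G c r)
    (hr : Antitone r) {d : ℕ} {u w : V} (hw : w ∈ SReach G d u) :
    ∃ q, ball q (r u) ⊆ ball (c w) (r w) ∧
      ball q (r u) ⊆ ball (c u) ((2 * d + 1) * r u) := by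
  obtain ⟨hwu, p, -, hlen, hint⟩ := hw
  have hsmall : ∀ x ∈ p.support, x ≠ w → r x ≤ r u := fun x hx hxw ↦
    if hxu : x = u then hxu ▸ le_rfl else hr (hint x hx hxu hxw).le
  obtain ⟨q, hqw, huq⟩ := hcm.exists_dist_le_of_walk (hcm.r_pos u).le p (hr hwu) hsmall
  have hlen' : (p.length : ℝ) ≤ d := by exact_mod_cast hlen
  refine ⟨q, ball_subset_ball' (by linarith), ball_subset_ball' ?_⟩
  rw [dist_comm]
  nlinarith [hcm.r_pos u]

end IsCoinModel

theorem koebe_sreach_upper_bound_general (d : ℕ) (V : Type) [LinearOrder V]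
    (G : SimpleGraph V) (c : V → EuclideanSpace ℝ (Fin 2)) (r : V → ℝ)
    (hcm : IsCoinModel G c r) (hko : ∀ a b : V, r b < r a → a ≤ b) (u : V) :
    (SReach G d u).ncard ≤ (2 * d + 1) ^ 2 := by
  obtain hS | hS := (SReach G d u).finite_or_infinite
  swap
  · simp [hS.ncard]
  choose! F hF using fun w (hw : w ∈ SReach G d u) ↦
    hcm.exists_ball_subset_of_mem_SReach (antitone_of_lt_imp_le hko) hw
  have hρ := hcm.r_pos u
  have hpack := card_mul_pow_finrank_le_of_pairwiseDisjoint_ball (s := hS.toFinset) hρ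
    (by positivity) (fun a ha b hb hab ↦ (hcm.disj a b hab).mono
      (hF a (hS.mem_toFinset.1 ha)).1 (hF b (hS.mem_toFinset.1 hb)).1)
    (fun a ha ↦ (hF a (hS.mem_toFinset.1 ha)).2)
  rw [finrank_euclideanSpace_fin, mul_pow] at hpack
  rw [Set.ncard_eq_toFinset_card _ hS]
  exact_mod_cast le_of_mul_le_mul_right hpack (by positivity)

/-- For any Koebe ordering of a graph with a coin model,
`|SReach_d[u]| ≤ (2d+1)²` for every vertex `u`. -/
theorem koebe_sreach_upper_bound (d : ℕ) (V : Type) [Fintype V] [LinearOrder V]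
    (G : SimpleGraph V) (c : V → EuclideanSpace ℝ (Fin 2)) (r : V → ℝ)
    (hcm : IsCoinModel G c r) (hko : ∀ a b : V, r b < r a → a ≤ b) (u : V) :
    (SReach G d u).ncard ≤ (2 * d + 1) ^ 2 :=
  koebe_sreach_upper_bound_general d V G c r hcm hko u
end

section
/- There is an absolute constant C > 0 such that the following holds. Let d ≥ 2 be an integer, let G be a finite simple graph with coin model (c, r), let ⪯ be a Koebe ordering of G with respect to (c, r), and let u be a vertex with c(u) = 0 and r(u) = 1. Then for every integer i ≥ 0, |B_i ∩ WReach_d[u]| ≤ C·d²·ln(d). -/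
open Metric

/-- The set of vertices weakly `d`-reachable from `u`: vertices `w ⪯ u` joined to `u`
by a path of length at most `d` all of whose vertices are `⪰ w`. -/
def WReach {V : Type*} [LinearOrder V] (G : SimpleGraph V) (d : ℕ) (u : V) : Set V :=
  {w | w ≤ u ∧ ∃ p : G.Walk u w, p.IsPath ∧ p.length ≤ d ∧ ∀ x ∈ p.support, w ≤ x}

/-- The bucket `B_i`: vertices `v` with `d^{3i} ≤ r v < d^{3i+3}`. -/
def bucket {V : Type*} (r : V → ℝ) (d : ℕ) (i : ℤ) : Set V :=
  {v | (d : ℝ) ^ (3 * i) ≤ r v ∧ r v < (d : ℝ) ^ (3 * i + 3)}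

open MeasureTheory ENNReal

lemma packing_lemma {V : Type*} (s : Finset V) (c : V → EuclideanSpace ℝ (Fin 2)) (r : V → ℝ)
    (ρ R : ℝ) (hρ : 0 < ρ)
    (hr : ∀ v ∈ s, ρ ≤ r v)
    (hdisj : ∀ a ∈ s, ∀ b ∈ s, a ≠ b → Disjoint (ball (c a) (r a)) (ball (c b) (r b)))
    (hsub : ∀ v ∈ s, ball (c v) (r v) ⊆ ball (0 : EuclideanSpace ℝ (Fin 2)) R) :
    (s.card : ℝ) ≤ (R / ρ) ^ 2 := by
  classical
  set μ := (volume : Measure (EuclideanSpace ℝ (Fin 2))) with hμ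
  have hB0 : μ (ball 0 1) ≠ 0 := (measure_ball_pos μ _ one_pos).ne'
  have hBt : μ (ball (0 : EuclideanSpace ℝ (Fin 2)) 1) ≠ ⊤ := measure_ball_lt_top.ne
  have hball : ∀ x : EuclideanSpace ℝ (Fin 2),
      μ (ball x ρ) = ENNReal.ofReal (ρ ^ 2) * μ (ball 0 1) := by
    intro x
    rw [Measure.addHaar_ball μ x hρ.le, finrank_euclideanSpace_fin]
  have hdisj' : (↑s : Set V).PairwiseDisjoint (fun v => ball (c v) ρ) := by
    intro a ha b hb hab
    exact Disjoint.mono (ball_subset_ball (hr a ha)) (ball_subset_ball (hr b hb))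
      (hdisj a ha b hb hab)
  have hsum : ∑ v ∈ s, μ (ball (c v) ρ) = μ (⋃ v ∈ s, ball (c v) ρ) :=
    (measure_biUnion_finset hdisj' (fun v _ => measurableSet_ball)).symm
  have hle : μ (⋃ v ∈ s, ball (c v) ρ) ≤ μ (ball 0 R) := by
    apply measure_mono
    simp only [Set.iUnion_subset_iff]
    intro v hv
    exact (ball_subset_ball (hr v hv)).trans (hsub v hv)
  have hRball : μ (ball (0 : EuclideanSpace ℝ (Fin 2)) R) ≤
      ENNReal.ofReal (R ^ 2) * μ (ball 0 1) := by
    by_cases hR : 0 ≤ R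
    · rw [Measure.addHaar_ball μ _ hR, finrank_euclideanSpace_fin]
    · rw [ball_eq_empty.2 (le_of_not_ge hR)]
      simp
  have key : (s.card : ℝ≥0∞) * ENNReal.ofReal (ρ ^ 2) * μ (ball 0 1) ≤
      ENNReal.ofReal (R ^ 2) * μ (ball 0 1) := by
    calc (s.card : ℝ≥0∞) * ENNReal.ofReal (ρ ^ 2) * μ (ball 0 1)
        = ∑ v ∈ s, μ (ball (c v) ρ) := by
          rw [Finset.sum_congr rfl (fun v _ => hball (c v)), Finset.sum_const, nsmul_eq_mul,
            mul_assoc]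
      _ = μ (⋃ v ∈ s, ball (c v) ρ) := hsum
      _ ≤ μ (ball 0 R) := hle
      _ ≤ ENNReal.ofReal (R ^ 2) * μ (ball 0 1) := hRball
  have key2 : (s.card : ℝ≥0∞) * ENNReal.ofReal (ρ ^ 2) ≤ ENNReal.ofReal (R ^ 2) :=
    (ENNReal.mul_le_mul_iff_left hB0 hBt).1 key
  have key3 : (s.card : ℝ) * ρ ^ 2 ≤ R ^ 2 := by
    rw [← ENNReal.ofReal_natCast, ← ENNReal.ofReal_mul (by positivity)] at key2
    exact (ENNReal.ofReal_le_ofReal_iff (by positivity)).1 key2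
  rw [div_pow, le_div_iff₀ (by positivity)]
  linarith

lemma walk_dist {V : Type*} {G : SimpleGraph V} {c : V → EuclideanSpace ℝ (Fin 2)} {r : V → ℝ}
    (h : IsCoinModel G c r) {a b : V} (p : G.Walk a b) (M : ℝ)
    (hM : ∀ x ∈ p.support, r x ≤ M) : dist (c a) (c b) ≤ 2 * p.length * M := by
  induction p with
  | nil => simp
  | @cons a x b hadj q ih =>
    have ha : r a ≤ M := hM a (by simp)
    have hx : r x ≤ M := hM x (by simp)
    have hM0 : 0 ≤ M := le_trans (h.r_pos a).le ha
    obtain ⟨z, hz1, hz2⟩ := h.touch a x hadj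
    have h1 : dist (c a) (c x) ≤ r a + r x := by
      calc dist (c a) (c x) ≤ dist (c a) z + dist z (c x) := dist_triangle _ _ _
        _ ≤ r a + r x := by
            rw [dist_comm (c a) z]
            exact add_le_add (by simpa [dist_comm] using mem_closedBall.1 hz1)
              (by simpa [dist_comm] using mem_closedBall.1 hz2)
    have h2 : dist (c x) (c b) ≤ 2 * q.length * M :=
      ih (fun y hy => hM y (by simp [hy]))
    have h3 : dist (c a) (c b) ≤ dist (c a) (c x) + dist (c x) (c b) := dist_triangle _ _ _
    simp only [SimpleGraph.Walk.length_cons]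
    push_cast
    nlinarith

lemma wreach_dist {V : Type*} [LinearOrder V] {G : SimpleGraph V}
    {c : V → EuclideanSpace ℝ (Fin 2)} {r : V → ℝ}
    (h : IsCoinModel G c r) (hk : ∀ a b : V, r b < r a → a ≤ b) {d : ℕ} {u w : V}
    (hw : w ∈ WReach G d u) : dist (c u) (c w) ≤ 2 * d * r w := by
  obtain ⟨hwu, p, hp, hlen, hsupp⟩ := hw
  have hM : ∀ x ∈ p.support, r x ≤ r w := by
    intro x hx
    by_contra hcon
    push_neg at hcon
    have h1 : x ≤ w := hk x w hcon
    have h2 : w ≤ x := hsupp x hx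
    have : x = w := le_antisymm h1 h2
    subst this
    exact lt_irrefl _ hcon
  have hpl : (p.length : ℝ) ≤ d := by exact_mod_cast hlen
  have := walk_dist h p (r w) hM
  nlinarith [h.r_pos w]

/-- For a Koebe ordering whose first disk is the unit disk at the origin,
every bucket contains at most `C·d²·ln d` weakly `d`-reachable vertices. -/
theorem koebe_bucket_small :
    ∃ C : ℝ, 0 < C ∧
      ∀ (d : ℕ), 2 ≤ d →
      ∀ (V : Type) [Fintype V] [LinearOrder V],
      ∀ (G : SimpleGraph V) (c : V → EuclideanSpace ℝ (Fin 2)) (r : V → ℝ),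
        IsCoinModel G c r →
        (∀ a b : V, r b < r a → a ≤ b) →
        ∀ u : V, c u = 0 → r u = 1 →
        ∀ i : ℤ, 0 ≤ i →
          ((bucket r d i ∩ WReach G d u).ncard : ℝ) ≤ C * d ^ 2 * Real.log d := by
  have hlog2 : 0 < Real.log 2 := Real.log_pos one_lt_two
  refine ⟨144 / Real.log 2, by positivity, ?_⟩
  intro d hd V _ _ G c r hm hk u hcu hru i hi
  classical
  have h2d : (2 : ℝ) ≤ (d : ℝ) := by exact_mod_cast hd
  have hd0 : (0 : ℝ) < d := by linarith
  set ρ0 : ℝ := (d : ℝ) ^ (3 * i) with hρ0def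
  have hρ0 : 0 < ρ0 := zpow_pos hd0 _
  set L : ℝ := Real.logb 2 d with hLdef
  have hLlog : L = Real.log d / Real.log 2 := rfl
  have hL1 : 1 ≤ L := by
    rw [hLlog, le_div_iff₀ hlog2, one_mul]
    exact Real.log_le_log (by norm_num) h2d
  set K : ℕ := ⌊3 * L⌋₊ + 1 with hKdef
  have hKL : (K : ℝ) ≤ 4 * L := by
    have h1 : (⌊3 * L⌋₊ : ℝ) ≤ 3 * L := Nat.floor_le (by linarith)
    push_cast [hKdef]
    linarith
  set S := bucket r d i ∩ WReach G d u with hSdef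
  have hSn : S.ncard = S.toFinset.card := Set.ncard_eq_toFinset_card' S
  set F := S.toFinset with hFdef
  set cls : ℕ → Finset V :=
    fun j => F.filter (fun v => ρ0 * 2 ^ j ≤ r v ∧ r v < ρ0 * 2 ^ (j + 1)) with hclsdef
  -- F is covered by the classes
  have hsubF : F ⊆ (Finset.range K).biUnion cls := by
    intro w hw
    have hwmem := hw
    rw [hFdef, Set.mem_toFinset] at hwmem
    obtain ⟨⟨hb1, hb2⟩, hwr⟩ := hwmem
    have hrw0 : 0 < r w := hm.r_pos w
    have hbd : r w < ρ0 * (d : ℝ) ^ 3 := by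
      have he : (d : ℝ) ^ (3 * i + 3) = ρ0 * (d : ℝ) ^ (3 : ℤ) := by
        rw [hρ0def, ← zpow_add₀ (ne_of_gt hd0)]
      rw [he] at hb2
      simpa using hb2
    set t := r w / ρ0 with htdef
    have h1t : 1 ≤ t := (one_le_div hρ0).2 hb1
    have ht0 : 0 < t := lt_of_lt_of_le one_pos h1t
    have htd : t < (d : ℝ) ^ 3 := (div_lt_iff₀ hρ0).2 (by linarith)
    set j := ⌊Real.logb 2 t⌋₊ with hjdef
    have hlb0 : 0 ≤ Real.logb 2 t := Real.logb_nonneg one_lt_two h1t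
    have h2j : (2 : ℝ) ^ j ≤ t := by
      have h := Real.rpow_le_rpow_of_exponent_le one_le_two (Nat.floor_le hlb0)
      rwa [Real.rpow_natCast, Real.rpow_logb two_pos (by norm_num) ht0] at h
    have ht2 : t < (2 : ℝ) ^ (j + 1) := by
      have h := Real.rpow_lt_rpow_of_exponent_lt one_lt_two
        (Nat.lt_floor_add_one (Real.logb 2 t))
      rw [Real.rpow_logb two_pos (by norm_num) ht0] at h
      calc t < (2 : ℝ) ^ ((j : ℝ) + 1) := h
        _ = (2 : ℝ) ^ (j + 1) := by
            rw [← Real.rpow_natCast (2 : ℝ) (j + 1)]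
            push_cast
            ring_nf
    have hjK : j < K := by
      have h3 : Real.logb 2 t < 3 * L := by
        have h4 : Real.logb 2 t < Real.logb 2 ((d : ℝ) ^ 3) :=
          Real.logb_lt_logb one_lt_two ht0 htd
        rwa [Real.logb_pow] at h4
      have h5 : (j : ℝ) ≤ Real.logb 2 t := Nat.floor_le hlb0
      have h6 : j ≤ ⌊3 * L⌋₊ := Nat.le_floor (by linarith)
      omega
    refine Finset.mem_biUnion.2 ⟨j, Finset.mem_range.2 hjK, ?_⟩
    refine Finset.mem_filter.2 ⟨hw, ?_, ?_⟩
    · have := (le_div_iff₀ hρ0).1 h2j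
      rw [htdef] at h2j
      nlinarith
    · have := (div_lt_iff₀ hρ0).1 ht2
      nlinarith
  -- per-class bound
  have hclass : ∀ j : ℕ, ((cls j).card : ℝ) ≤ 36 * (d : ℝ) ^ 2 := by
    intro j
    have hρj : 0 < ρ0 * 2 ^ j := by positivity
    have hpack := packing_lemma (cls j) c r (ρ0 * 2 ^ j) (6 * d * (ρ0 * 2 ^ j)) hρj
      (fun v hv => ((Finset.mem_filter.1 hv).2).1)
      (fun a _ b _ hab => hm.disj a b hab)
      ?_
    · have heq : (6 * (d : ℝ) * (ρ0 * 2 ^ j)) / (ρ0 * 2 ^ j) = 6 * d :=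
        mul_div_cancel_right₀ _ (ne_of_gt hρj)
      rw [heq] at hpack
      nlinarith
    · intro v hv
      have hvF := (Finset.mem_filter.1 hv).1
      have hvub := ((Finset.mem_filter.1 hv).2).2
      rw [hFdef, Set.mem_toFinset] at hvF
      have hvw : v ∈ WReach G d u := hvF.2
      have hdist : dist (c u) (c v) ≤ 2 * d * r v := wreach_dist hm hk hvw
      rw [hcu] at hdist
      have hrv0 : 0 < r v := hm.r_pos v
      intro y hy
      rw [mem_ball] at hy ⊢
      have ht : dist y 0 ≤ dist y (c v) + dist (c v) 0 := dist_triangle _ _ _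
      have hcv0 : dist (c v) 0 ≤ 2 * d * r v := by rwa [dist_comm] at hdist
      have hexp : r v < 2 * (ρ0 * 2 ^ j) := by
        rw [pow_succ] at hvub
        linarith
      nlinarith
  -- combine
  have hbound : (F.card : ℝ) ≤ (K : ℝ) * (36 * (d : ℝ) ^ 2) := by
    have h1 : F.card ≤ ∑ j ∈ Finset.range K, (cls j).card :=
      le_trans (Finset.card_le_card hsubF) Finset.card_biUnion_le
    have h2 : (F.card : ℝ) ≤ ∑ j ∈ Finset.range K, ((cls j).card : ℝ) := by
      exact_mod_cast h1
    calc (F.card : ℝ) ≤ ∑ j ∈ Finset.range K, ((cls j).card : ℝ) := h2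
      _ ≤ ∑ _j ∈ Finset.range K, 36 * (d : ℝ) ^ 2 :=
          Finset.sum_le_sum (fun j _ => hclass j)
      _ = (K : ℝ) * (36 * (d : ℝ) ^ 2) := by
          rw [Finset.sum_const, Finset.card_range, nsmul_eq_mul]
  have hfin : (K : ℝ) * (36 * (d : ℝ) ^ 2) ≤ 144 / Real.log 2 * (d : ℝ) ^ 2 * Real.log d := by
    have h1 : (K : ℝ) * (36 * (d : ℝ) ^ 2) ≤ 4 * L * (36 * (d : ℝ) ^ 2) := by
      apply mul_le_mul_of_nonneg_right hKL (by positivity)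
    have h2 : 4 * L * (36 * (d : ℝ) ^ 2) = 144 / Real.log 2 * (d : ℝ) ^ 2 * Real.log d := by
      rw [hLlog]
      field_simp
      ring
    linarith
  calc ((bucket r d i ∩ WReach G d u).ncard : ℝ) = (F.card : ℝ) := by rw [← hSdef, hSn, hFdef]
    _ ≤ (K : ℝ) * (36 * (d : ℝ) ^ 2) := hbound
    _ ≤ 144 / Real.log 2 * (d : ℝ) ^ 2 * Real.log d := hfin
end

section
/- Let x, x', y ∈ ℝ² and let ρ, ξ, α, β be nonnegative reals satisfying ‖x‖ ≤ ρ+α, ‖x'‖ ≤ ρ+α, ‖x−x'‖ ≥ 2ρ, ‖y‖ ≤ β, ‖x−y‖ ≥ ρ+ξ, and ‖x'−y‖ ≥ ρ+ξ. Then 2ρξ + ξ² ≤ 2ρα + β² + α² + 2β·√(2ρα + α²). -/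
/-!
By the parallelogram law, two points of the disc of radius `ρ + α` at distance at least `2ρ`
have `‖x + x'‖ ≤ 2 √((ρ + α)² - ρ²)`. Adding the expansions of `‖x - y‖²` and `‖x' - y‖²`
makes `y` interact with `x` and `x'` only through `⟪x + x', y⟫`, which Cauchy–Schwarz bounds by
`‖x + x'‖ β`; halving the sum gives the inequality.
-/

section InnerProductSpace

variable {E : Type*} [NormedAddCommGroup E] [InnerProductSpace ℝ E]

theorem norm_add_le_two_mul_sqrt_of_le_norm_sub {x x' : E} {R ρ : ℝ} (hρ : 0 ≤ ρ)
    (hx : ‖x‖ ≤ R) (hx' : ‖x'‖ ≤ R) (hxx' : 2 * ρ ≤ ‖x - x'‖) :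
    ‖x + x'‖ ≤ 2 * Real.sqrt (R ^ 2 - ρ ^ 2) := by
  have parallelogram := parallelogram_law_with_norm ℝ x x'
  have hx2 : ‖x‖ ^ 2 ≤ R ^ 2 := pow_le_pow_left₀ (norm_nonneg _) hx 2
  have hx'2 : ‖x'‖ ^ 2 ≤ R ^ 2 := pow_le_pow_left₀ (norm_nonneg _) hx' 2
  have hxx'2 : (2 * ρ) ^ 2 ≤ ‖x - x'‖ ^ 2 := pow_le_pow_left₀ (by positivity) hxx' 2
  have hsum2 : ‖x + x'‖ ^ 2 ≤ 4 * (R ^ 2 - ρ ^ 2) := by linarith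
  calc ‖x + x'‖ = Real.sqrt (‖x + x'‖ ^ 2) := (Real.sqrt_sq (norm_nonneg _)).symm
    _ ≤ Real.sqrt (2 ^ 2 * (R ^ 2 - ρ ^ 2)) := Real.sqrt_le_sqrt (by linarith)
    _ = 2 * Real.sqrt (R ^ 2 - ρ ^ 2) := by
      rw [Real.sqrt_mul (by positivity), Real.sqrt_sq zero_le_two]

theorem norm_sub_sq_add_norm_sub_sq_le (x x' y : E) :
    ‖x - y‖ ^ 2 + ‖x' - y‖ ^ 2 ≤
      ‖x‖ ^ 2 + ‖x'‖ ^ 2 + 2 * (‖x + x'‖ * ‖y‖) + 2 * ‖y‖ ^ 2 := by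
  have cauchy_schwarz : -(‖x + x'‖ * ‖y‖) ≤ inner ℝ (x + x') y :=
    neg_le_of_abs_le (abs_real_inner_le_norm _ _)
  rw [norm_sub_sq_real x y, norm_sub_sq_real x' y]
  rw [inner_add_left] at cauchy_schwarz
  linarith

end InnerProductSpace

theorem squeeze_inequality_general (x x' y : EuclideanSpace ℝ (Fin 2)) (ρ ξ α β : ℝ)
    (hρ : 0 ≤ ρ) (hξ : 0 ≤ ξ)
    (hx : ‖x‖ ≤ ρ + α) (hx' : ‖x'‖ ≤ ρ + α) (hxx' : 2 * ρ ≤ ‖x - x'‖)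
    (hy : ‖y‖ ≤ β) (hxy : ρ + ξ ≤ ‖x - y‖) (hx'y : ρ + ξ ≤ ‖x' - y‖) :
    2 * ρ * ξ + ξ ^ 2 ≤
      2 * ρ * α + β ^ 2 + α ^ 2 + 2 * β * Real.sqrt (2 * ρ * α + α ^ 2) := by
  have hmid : ‖x + x'‖ ≤ 2 * Real.sqrt (2 * ρ * α + α ^ 2) := by
    convert norm_add_le_two_mul_sqrt_of_le_norm_sub hρ hx hx' hxx' using 3
    ring
  have hprod : ‖x + x'‖ * ‖y‖ ≤ 2 * Real.sqrt (2 * ρ * α + α ^ 2) * β :=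
    mul_le_mul hmid hy (norm_nonneg _) (by positivity)
  have hsum := norm_sub_sq_add_norm_sub_sq_le x x' y
  have hxy2 := pow_le_pow_left₀ (by positivity) hxy 2
  have hx'y2 := pow_le_pow_left₀ (by positivity) hx'y 2
  have hx2 := pow_le_pow_left₀ (norm_nonneg _) hx 2
  have hx'2 := pow_le_pow_left₀ (norm_nonneg _) hx' 2
  have hy2 := pow_le_pow_left₀ (norm_nonneg _) hy 2
  linarith

/-- The key geometric inequality in the proof that two accessible far buckets squeeze
out intermediate ones. -/
theorem squeeze_inequality (x x' y : EuclideanSpace ℝ (Fin 2)) (ρ ξ α β : ℝ)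
    (hρ : 0 ≤ ρ) (hξ : 0 ≤ ξ) (hα : 0 ≤ α) (hβ : 0 ≤ β)
    (hx : ‖x‖ ≤ ρ + α) (hx' : ‖x'‖ ≤ ρ + α) (hxx' : 2 * ρ ≤ ‖x - x'‖)
    (hy : ‖y‖ ≤ β) (hxy : ρ + ξ ≤ ‖x - y‖) (hx'y : ρ + ξ ≤ ‖x' - y‖) :
    2 * ρ * ξ + ξ ^ 2 ≤
      2 * ρ * α + β ^ 2 + α ^ 2 + 2 * β * Real.sqrt (2 * ρ * α + α ^ 2) :=
  squeeze_inequality_general x x' y ρ ξ α β hρ hξ hx hx' hxx' hy hxy hx'y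
end

section
/- Let m ∈ ℕ and let 0 = x_0 ≤ x_1 ≤ … ≤ x_m be reals with x_i − x_{i−1} ≤ 1 for each 1 ≤ i ≤ m. Then Σ_{i=1}^{m} (x_i − x_{i−1})/(1+x_i) ≥ (1/2)·ln(1+x_m). -/
/-! Since `x_{i-1} ≥ 0` and the increments are at most `1`, we have `1 + x_i ≤ 2 (1 + x_{i-1})`,
so `log (1 + x_i) - log (1 + x_{i-1}) ≤ (x_i - x_{i-1}) / (1 + x_{i-1}) ≤ 2 (x_i - x_{i-1}) / (1 + x_i)`.
Summing, the left-hand sides telescope to `log (1 + x_m)`. -/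

open Finset Real

theorem sum_Icc_sub_pred {M : Type*} [AddCommGroup M] (f : ℕ → M) (m : ℕ) :
    ∑ i ∈ Icc 1 m, (f i - f (i - 1)) = f m - f 0 := by
  induction m with
  | zero => simp
  | succ n ih => rw [sum_Icc_succ_top (by omega), ih, Nat.add_sub_cancel]; abel

theorem sub_le_sum_Icc_of_sub_pred_le {M : Type*} [AddCommGroup M] [PartialOrder M]
    [IsOrderedAddMonoid M] {f g : ℕ → M} {m : ℕ}
    (h : ∀ i, 1 ≤ i → i ≤ m → f i - f (i - 1) ≤ g i) :
    f m - f 0 ≤ ∑ i ∈ Icc 1 m, g i := by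
  rw [← sum_Icc_sub_pred]
  exact sum_le_sum fun i hi => h i (mem_Icc.1 hi).1 (mem_Icc.1 hi).2

theorem log_sub_log_le_two_mul_sub_div_s12 {u v : ℝ} (hu : 0 < u) (huv : u ≤ v) (hv : v ≤ 2 * u) :
    log v - log u ≤ 2 * (v - u) / v := by
  have hv0 : 0 < v := hu.trans_le huv
  calc log v - log u = log (v / u) := (log_div hv0.ne' hu.ne').symm
    _ ≤ v / u - 1 := log_le_sub_one_of_pos (by positivity)
    _ = (v - u) / u := by field_simp
    _ ≤ 2 * (v - u) / v := by
      rw [div_le_div_iff₀ hu hv0]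
      nlinarith [sub_nonneg.2 huv]

/-- For `0 = x_0 ≤ x_1 ≤ … ≤ x_m` with unit increments,
`Σ_{i=1}^{m} (x_i − x_{i−1})/(1+x_i) ≥ (1/2)·ln(1+x_m)`. -/
theorem sum_increments_lower_bound (m : ℕ) (x : ℕ → ℝ) (h0 : x 0 = 0)
    (hmono : ∀ i, 1 ≤ i → i ≤ m → x (i - 1) ≤ x i)
    (hstep : ∀ i, 1 ≤ i → i ≤ m → x i - x (i - 1) ≤ 1) :
    (1 / 2) * Real.log (1 + x m) ≤
      ∑ i ∈ Finset.Icc 1 m, (x i - x (i - 1)) / (1 + x i) := by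
  have hmonoOn : MonotoneOn x (Set.Icc 0 m) :=
    monotoneOn_of_le_add_one Set.ordConnected_Icc fun i _ _ hi =>
      hmono (i + 1) (by omega) hi.2
  have hx : ∀ i, i ≤ m → 0 ≤ x i := fun i hi =>
    h0 ▸ hmonoOn (by simp) (by simp [hi]) (Nat.zero_le i)
  have hterm : ∀ i, 1 ≤ i → i ≤ m →
      1 / 2 * log (1 + x i) - 1 / 2 * log (1 + x (i - 1)) ≤ (x i - x (i - 1)) / (1 + x i) := by
    intro i hi1 him
    have := log_sub_log_le_two_mul_sub_div_s12 (u := 1 + x (i - 1)) (v := 1 + x i)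
      (by linarith [hx (i - 1) (by omega)]) (by linarith [hmono i hi1 him])
      (by linarith [hstep i hi1 him, hx (i - 1) (by omega)])
    rw [add_sub_add_left_eq_sub] at this
    linarith [mul_div_assoc 2 (x i - x (i - 1)) (1 + x i)]
  simpa [h0] using sub_le_sum_Icc_of_sub_pred_le hterm
end

section
/- Let d ≥ 1 be an integer, let G be a finite simple graph with coin model (c, r), let ⪯ be a Koebe ordering of G with respect to (c, r), and let u be a vertex with c(u) = 0 and r(u) = 1. Then every vertex w ∈ WReach_d[u] with w ≠ u satisfies r(w) ≥ 1 and 1 + r(w) ≤ ‖c(w)‖ ≤ 2d·r(w). -/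
open Metric

private lemma walk_dist_le {V : Type*} {G : SimpleGraph V}
    {c : V → EuclideanSpace ℝ (Fin 2)} {r : V → ℝ} (hcm : IsCoinModel G c r)
    (R : ℝ) : ∀ {a b : V} (p : G.Walk a b), (∀ x ∈ p.support, r x ≤ R) →
    dist (c a) (c b) ≤ 2 * R * p.length := by
  intro a b p
  induction p with
  | nil => simp
  | @cons a m b h q ih =>
    intro hs
    have hra : r a ≤ R := hs a (by simp)
    have hrm : r m ≤ R := hs m (by simp)
    obtain ⟨z, hz1, hz2⟩ := hcm.touch a m h
    have h1 : dist (c a) (c m) ≤ 2 * R := by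
      calc dist (c a) (c m) ≤ dist (c a) z + dist z (c m) := dist_triangle _ _ _
        _ ≤ r a + r m := by
            have := mem_closedBall'.mp hz1
            have := mem_closedBall.mp hz2
            linarith [mem_closedBall'.mp hz1, mem_closedBall.mp hz2]
        _ ≤ 2 * R := by linarith
    have h2 : dist (c m) (c b) ≤ 2 * R * q.length :=
      ih (fun x hx => hs x (by simp [hx]))
    calc dist (c a) (c b) ≤ dist (c a) (c m) + dist (c m) (c b) := dist_triangle _ _ _
      _ ≤ 2 * R + 2 * R * q.length := by linarith
      _ = 2 * R * (q.length + 1 : ℕ) := by push_cast; ring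
      _ = 2 * R * (SimpleGraph.Walk.cons h q).length := by
          rw [SimpleGraph.Walk.length_cons]

/-- If `D(u)` is the unit disk at the origin, every `w ∈ WReach_d[u]` with `w ≠ u`
satisfies `r(w) ≥ 1` and `1 + r(w) ≤ ‖c(w)‖ ≤ 2d·r(w)`. -/
theorem koebe_wreach_geometry (d : ℕ) (hd : 1 ≤ d) (V : Type) [Fintype V] [LinearOrder V]
    (G : SimpleGraph V) (c : V → EuclideanSpace ℝ (Fin 2)) (r : V → ℝ)
    (hcm : IsCoinModel G c r) (hko : ∀ a b : V, r b < r a → a ≤ b)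
    (u : V) (hcu : c u = 0) (hru : r u = 1)
    (w : V) (hw : w ∈ WReach G d u) (hwu : w ≠ u) :
    1 ≤ r w ∧ 1 + r w ≤ ‖c w‖ ∧ ‖c w‖ ≤ 2 * d * r w := by
  obtain ⟨hwle, p, hp, hlen, hsup⟩ := hw
  have hrle : ∀ x ∈ p.support, r x ≤ r w := by
    intro x hx
    by_contra hlt
    push_neg at hlt
    have hxw : x ≤ w := hko x w hlt
    have hxeq : x = w := le_antisymm hxw (hsup x hx)
    rw [hxeq] at hlt
    exact lt_irrefl _ hlt
  have hr1 : 1 ≤ r w := hru ▸ hrle u p.start_mem_support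
  have hrw : 0 < r w := hcm.r_pos w
  have hdisj := hcm.disj u w (Ne.symm hwu)
  have hlow : r u + r w ≤ dist (c u) (c w) :=
    (disjoint_ball_ball_iff (hcm.r_pos u) hrw).mp hdisj
  have hcn : dist (c u) (c w) = ‖c w‖ := by
    rw [hcu, dist_comm, dist_zero_right]
  constructor
  · exact hr1
  constructor
  · rw [← hcn, ← hru]; exact hlow
  · have := walk_dist_le hcm (r w) p hrle
    rw [hcn] at this
    calc ‖c w‖ ≤ 2 * r w * p.length := this
      _ ≤ 2 * d * r w := by
          have : (p.length : ℝ) ≤ d := by exact_mod_cast hlen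
          nlinarith
end
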